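/- arXiv:2205.02498 — 4 statements merged into one kernel-verified Lean document; each statement's English description precedes it below -/
import Mathlib

section
/- Let Ω = (0,L) ⊂ ℝ with L > 0, let Ω₀ ⊆ Ω, and let φ : ℝ → [0,1] be a smooth function with support contained in Ω₀ satisfying |φ'(x)| ≤ C_φ · φ(x)^{1/3} for all x ∈ ℝ. Then there is a constant C > 0, independent of φ and Ω₀, such that for every u ∈ C¹(closure Ω): ∫_Ω φ(x)² |u(x)|⁴ dx ≤ C · ‖u‖_{L¹(Ω₀)}² · ( ∫_Ω φ(x)² |u'(x)|² dx + C_φ³ ‖u‖_{L¹(Ω₀)}² ). -/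
open MeasureTheory Set

/-- If `c ≤ k/ε` for all positive `ε` with `k ≥ 0`, then `c ≤ 0`. -/
lemma aux_le_zero (c k : ℝ) (hk : 0 ≤ k) (h : ∀ ε > 0, c ≤ k / ε) : c ≤ 0 := by
  by_contra hpos
  push_neg at hpos
  have h1 := h ((k + 1) / c) (by positivity)
  rw [div_div_eq_mul_div, le_div_iff₀ (by positivity)] at h1
  nlinarith

/-- Main algebraic bootstrap step. -/
lemma aux_alg (σ Cφ N D : ℝ) (hσ : 0 ≤ σ) (hCφ : 0 < Cφ) (hN : 0 ≤ N) (hD : 0 ≤ D)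
    (h : σ ^ 3 ≤ 4 / 3 * Cφ * N * σ ^ 2 + σ ^ 3 / 4 + 4 * D * N) :
    σ ^ 3 ≤ 64 * Cφ ^ 3 * N ^ 3 + 10 * (D * N) := by
  by_cases hcase : σ ≤ 4 * Cφ * N
  · have h2 : σ ^ 3 ≤ (4 * Cφ * N) ^ 3 := pow_le_pow_left₀ hσ hcase 3
    nlinarith [mul_nonneg hD hN, mul_nonneg (pow_nonneg hCφ.le 3) (pow_nonneg hN 3)]
  · push_neg at hcase
    have h2 : 4 / 3 * Cφ * N * σ ^ 2 ≤ 1 / 3 * σ * σ ^ 2 := by nlinarith [sq_nonneg σ]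
    have h3 : 1 / 3 * σ * σ ^ 2 = 1 / 3 * σ ^ 3 := by ring
    nlinarith [mul_nonneg hD hN, mul_nonneg (pow_nonneg hCφ.le 3) (pow_nonneg hN 3)]

/-- Pointwise Young-type inequality. -/
lemma aux_young (a b p ε : ℝ) (hp : 0 ≤ p) (hε : 0 < ε) :
    p ^ 4 * (|a| * |b|) ≤ ε * (p ^ 6 * |b| ^ 2) + 1/(4*ε) * (p ^ 2 * a ^ 2) := by
  have key : 4 * ε * (p ^ 4 * (|a| * |b|))
      ≤ 4 * ε ^ 2 * (p ^ 6 * |b| ^ 2) + p ^ 2 * a ^ 2 := by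
    nlinarith [sq_nonneg (2 * ε * (p ^ 3 * |b|) - p * |a|), sq_abs a]
  rw [show ε * (p ^ 6 * |b| ^ 2) + 1/(4*ε) * (p ^ 2 * a ^ 2)
      = (4 * ε ^ 2 * (p ^ 6 * |b| ^ 2) + p ^ 2 * a ^ 2) / (4 * ε) by
      field_simp,
    le_div_iff₀ (by positivity)]
  linarith

set_option maxHeartbeats 1000000 in
theorem stmt_0 (L : ℝ) (hL : 0 < L) :
    ∃ C > 0, ∀ (Ω₀ : Set ℝ), MeasurableSet Ω₀ → Ω₀ ⊆ Ioo 0 L →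
      ∀ (φ : ℝ → ℝ) (Cφ : ℝ), 0 < Cφ → ContDiff ℝ (⊤ : ℕ∞) φ →
        (∀ x, φ x ∈ Icc (0:ℝ) 1) → Function.support φ ⊆ Ω₀ →
        (∀ x, |deriv φ x| ≤ Cφ * (φ x) ^ ((1:ℝ)/3)) →
        ∀ u : ℝ → ℝ, ContDiffOn ℝ 1 u (Icc 0 L) →
          ∫ x in Ioo 0 L, (φ x) ^ 2 * |u x| ^ 4
            ≤ C * (∫ x in Ω₀, |u x|) ^ 2 *
              ((∫ x in Ioo 0 L, (φ x) ^ 2 * |derivWithin u (Icc 0 L) x| ^ 2)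
                + Cφ ^ 3 * (∫ x in Ω₀, |u x|) ^ 2) := by
  refine ⟨64, by norm_num, ?_⟩
  intro Ω₀ hΩm hΩsub φ Cφ hCφ hφC hφI hφsupp hφd u hu
  set u' : ℝ → ℝ := derivWithin u (Icc 0 L) with hu'def
  have hφ0 : ∀ x, 0 ≤ φ x := fun x => (hφI x).1
  have hφzero : ∀ x, x ∉ Ω₀ → φ x = 0 := by
    intro x hx
    by_contra h
    exact hx (hφsupp h)
  set ψ : ℝ → ℝ := fun x => (φ x) ^ ((1:ℝ)/3) with hψdef
  have hψ0 : ∀ x, 0 ≤ ψ x := fun x => Real.rpow_nonneg (hφ0 x) _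
  have hψpow : ∀ (x : ℝ) (k : ℕ), ψ x ^ k = (φ x) ^ ((k : ℝ)/3) := by
    intro x k
    rw [hψdef]
    rw [← Real.rpow_natCast ((φ x) ^ ((1:ℝ)/3)) k, ← Real.rpow_mul (hφ0 x)]
    congr 1
    ring
  have hψ6 : ∀ x, φ x ^ 2 = ψ x ^ 6 := by
    intro x
    rw [hψpow x 6, show ((6:ℕ) : ℝ)/3 = ((2:ℕ) : ℝ) by norm_num, Real.rpow_natCast]
  have hφcont : Continuous φ := hφC.continuous
  have hψcont : Continuous ψ := by
    rw [continuous_iff_continuousAt]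
    intro x
    exact (Real.continuousAt_rpow_const _ _ (Or.inr (by norm_num))).comp hφcont.continuousAt
  have hucont : ContinuousOn u (Icc 0 L) := hu.continuousOn
  have hu'cont : ContinuousOn u' (Icc 0 L) :=
    hu.continuousOn_derivWithin (uniqueDiffOn_Icc hL) le_rfl
  -- the function g and its maximum
  set g : ℝ → ℝ := fun x => ψ x ^ 4 * u x ^ 2 with hgdef
  have hgcont : ContinuousOn g (Icc 0 L) :=
    ((hψcont.pow 4).continuousOn).mul (hucont.pow 2)
  have hg0 : ∀ x, 0 ≤ g x := fun x => mul_nonneg (pow_nonneg (hψ0 x) 4) (sq_nonneg _)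
  obtain ⟨c, hcmem, hcmax⟩ :=
    isCompact_Icc.exists_isMaxOn (nonempty_Icc.2 hL.le) hgcont
  set S : ℝ := g c with hSdef
  have hS0 : 0 ≤ S := hg0 c
  set σ : ℝ := Real.sqrt S with hσdef
  have hσ0 : 0 ≤ σ := Real.sqrt_nonneg _
  have hσ2 : σ ^ 2 = S := Real.sq_sqrt hS0
  have hgS : ∀ x ∈ Icc 0 L, g x ≤ S := hcmax
  -- key pointwise bound
  have hkey : ∀ x ∈ Icc 0 L, ψ x ^ 2 * |u x| ≤ σ := by
    intro x hx
    have h1 : (ψ x ^ 2 * |u x|) ^ 2 = g x := by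
      rw [hgdef, mul_pow, ← pow_mul, sq_abs]
    calc ψ x ^ 2 * |u x| = Real.sqrt ((ψ x ^ 2 * |u x|) ^ 2) :=
          (Real.sqrt_sq (by positivity)).symm
      _ ≤ Real.sqrt S := Real.sqrt_le_sqrt (by rw [h1]; exact hgS x hx)
  -- integrability helper
  have hIntOn : ∀ f : ℝ → ℝ, ContinuousOn f (Icc 0 L) → IntegrableOn f (Ioo 0 L) := by
    intro f hf
    exact (hf.integrableOn_compact isCompact_Icc).mono_set Ioo_subset_Icc_self
  set N : ℝ := ∫ x in Ω₀, |u x| with hNdef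
  set D : ℝ := ∫ x in Ioo 0 L, (φ x) ^ 2 * |u' x| ^ 2 with hDdef
  have hN0 : 0 ≤ N := setIntegral_nonneg hΩm fun x _ => abs_nonneg _
  have hD0 : 0 ≤ D := setIntegral_nonneg measurableSet_Ioo fun x _ => by positivity
  set A : ℝ := ∫ x in Ioo 0 L, ψ x ^ 2 * u x ^ 2 with hAdef
  set B : ℝ := ∫ x in Ioo 0 L, ψ x ^ 4 * (|u x| * |u' x|) with hBdef
  have hψzero : ∀ x, x ∉ Ω₀ → ψ x = 0 := by
    intro x hx
    rw [hψdef]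
    simp only
    rw [hφzero x hx, Real.zero_rpow (by norm_num : (1:ℝ)/3 ≠ 0)]
  -- integrability facts
  have intA : IntegrableOn (fun x => ψ x ^ 2 * u x ^ 2) (Ioo 0 L) :=
    hIntOn _ (((hψcont.pow 2).continuousOn).mul (hucont.pow 2))
  have intB : IntegrableOn (fun x => ψ x ^ 4 * (|u x| * |u' x|)) (Ioo 0 L) :=
    hIntOn _ (((hψcont.pow 4).continuousOn).mul (hucont.abs.mul hu'cont.abs))
  have intD : IntegrableOn (fun x => (φ x) ^ 2 * |u' x| ^ 2) (Ioo 0 L) :=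
    hIntOn _ (((hφcont.pow 2).continuousOn).mul (hu'cont.abs.pow 2))
  have intI : IntegrableOn (fun x => (φ x) ^ 2 * |u x| ^ 4) (Ioo 0 L) :=
    hIntOn _ (((hφcont.pow 2).continuousOn).mul (hucont.abs.pow 4))
  have intuabs : IntegrableOn (fun x => |u x|) (Ioo 0 L) := hIntOn _ hucont.abs
  -- A ≤ σ * N
  have hA_le : A ≤ σ * N := by
    have hintind : IntegrableOn (Ω₀.indicator fun y => σ * |u y|) (Ioo 0 L) :=
      (intuabs.const_mul σ).indicator hΩm
    have hpt : ∀ x ∈ Ioo 0 L, ψ x ^ 2 * u x ^ 2 ≤ Ω₀.indicator (fun y => σ * |u y|) x := by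
      intro x hx
      by_cases hmem : x ∈ Ω₀
      · rw [indicator_of_mem hmem]
        have hk := hkey x (Ioo_subset_Icc_self hx)
        calc ψ x ^ 2 * u x ^ 2 = (ψ x ^ 2 * |u x|) * |u x| := by
              rw [mul_assoc, abs_mul_abs_self]; ring
          _ ≤ σ * |u x| := mul_le_mul_of_nonneg_right hk (abs_nonneg _)
      · rw [indicator_of_notMem hmem, hψzero x hmem]
        norm_num
    calc A ≤ ∫ x in Ioo 0 L, Ω₀.indicator (fun y => σ * |u y|) x :=
          setIntegral_mono_on intA hintind measurableSet_Ioo hpt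
      _ = ∫ x in Ioo 0 L ∩ Ω₀, σ * |u x| := setIntegral_indicator hΩm
      _ = ∫ x in Ω₀, σ * |u x| := by rw [inter_eq_self_of_subset_right hΩsub]
      _ = σ * N := by rw [hNdef, integral_const_mul]
  -- I ≤ σ^3 * N
  have hI_le : (∫ x in Ioo 0 L, (φ x) ^ 2 * |u x| ^ 4) ≤ σ ^ 3 * N := by
    have hintind : IntegrableOn (Ω₀.indicator fun y => σ ^ 3 * |u y|) (Ioo 0 L) :=
      (intuabs.const_mul (σ ^ 3)).indicator hΩm
    have hpt : ∀ x ∈ Ioo 0 L, (φ x) ^ 2 * |u x| ^ 4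
        ≤ Ω₀.indicator (fun y => σ ^ 3 * |u y|) x := by
      intro x hx
      by_cases hmem : x ∈ Ω₀
      · rw [indicator_of_mem hmem]
        have hk := hkey x (Ioo_subset_Icc_self hx)
        calc (φ x) ^ 2 * |u x| ^ 4 = (ψ x ^ 2 * |u x|) ^ 3 * |u x| := by
              rw [hψ6 x]; ring
          _ ≤ σ ^ 3 * |u x| :=
              mul_le_mul_of_nonneg_right (pow_le_pow_left₀ (by positivity) hk 3) (abs_nonneg _)
      · rw [indicator_of_notMem hmem, hφzero x hmem]
        norm_num
    calc (∫ x in Ioo 0 L, (φ x) ^ 2 * |u x| ^ 4)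
        ≤ ∫ x in Ioo 0 L, Ω₀.indicator (fun y => σ ^ 3 * |u y|) x :=
          setIntegral_mono_on intI hintind measurableSet_Ioo hpt
      _ = ∫ x in Ioo 0 L ∩ Ω₀, σ ^ 3 * |u x| := setIntegral_indicator hΩm
      _ = ∫ x in Ω₀, σ ^ 3 * |u x| := by rw [inter_eq_self_of_subset_right hΩsub]
      _ = σ ^ 3 * N := by rw [hNdef, integral_const_mul]
  -- FTC step : S ≤ 4/3 Cφ A + 2 B
  have hS_AB : S ≤ 4/3 * Cφ * A + 2 * B := by
    set G' : ℝ → ℝ := fun x => (deriv φ x * (4/3) * ψ x) * u x ^ 2 + ψ x ^ 4 * (2 * u x * u' x)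
      with hG'def
    set H : ℝ → ℝ := fun x => 4/3 * Cφ * (ψ x ^ 2 * u x ^ 2) + 2 * (ψ x ^ 4 * (|u x| * |u' x|))
      with hHdef
    have hderφ : Continuous (deriv φ) := hφC.continuous_deriv (by simp)
    have hG'cont : ContinuousOn G' (Icc 0 L) := by
      apply ContinuousOn.add
      · exact (((hderφ.mul continuous_const).mul hψcont).continuousOn).mul (hucont.pow 2)
      · exact ((hψcont.pow 4).continuousOn).mul ((continuousOn_const.mul hucont).mul hu'cont)
    have hHcont : ContinuousOn H (Icc 0 L) := by
      apply ContinuousOn.add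
      · exact continuousOn_const.mul (((hψcont.pow 2).continuousOn).mul (hucont.pow 2))
      · exact continuousOn_const.mul
          (((hψcont.pow 4).continuousOn).mul (hucont.abs.mul hu'cont.abs))
    have hH0 : ∀ x, 0 ≤ H x := by
      intro x
      rw [hHdef]
      simp only
      have h1 : (0:ℝ) ≤ 4/3 * Cφ := by positivity
      have h2 : (0:ℝ) ≤ ψ x ^ 2 * u x ^ 2 := by positivity
      have h3 : (0:ℝ) ≤ ψ x ^ 4 * (|u x| * |u' x|) := by positivity
      positivity
    have hgderiv : ∀ x ∈ Ioo 0 L, HasDerivAt g (G' x) x := by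
      intro x hx
      have hφdx : HasDerivAt φ (deriv φ x) x := (hφC.differentiable (by simp) x).hasDerivAt
      have h1 : HasDerivAt (fun y => (φ y) ^ ((4:ℝ)/3))
          (deriv φ x * ((4:ℝ)/3) * (φ x) ^ ((4:ℝ)/3 - 1)) x :=
        hφdx.rpow_const (Or.inr (by norm_num))
      have hud : HasDerivAt u (u' x) x := by
        have hmem : Icc (0:ℝ) L ∈ nhds x := Icc_mem_nhds hx.1 hx.2
        exact ((hu.differentiableOn one_ne_zero x
          (Ioo_subset_Icc_self hx)).hasDerivWithinAt).hasDerivAt hmem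
      have h2 : HasDerivAt (fun y => u y ^ 2) (2 * u x * u' x) x := by
        have h := hud.pow 2
        refine h.congr_deriv ?_
        push_cast
        ring
      have h3 := h1.mul h2
      have hfun : g = fun y => (φ y) ^ ((4:ℝ)/3) * u y ^ 2 := by
        funext y
        rw [hgdef]
        simp only
        rw [hψpow y 4]
        norm_num
      rw [hfun]
      refine h3.congr_deriv ?_
      have hψ1 : ψ x = φ x ^ ((1:ℝ)/3) := by rw [hψdef]
      have hψ4 : ψ x ^ 4 = φ x ^ ((4:ℝ)/3) := by rw [hψpow x 4]; norm_num
      rw [hG'def]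
      simp only
      rw [hψ1, hψ4, show (4:ℝ)/3 - 1 = 1/3 by norm_num]
    have hintG' : IntervalIntegrable G' volume 0 c := by
      apply ContinuousOn.intervalIntegrable
      rw [uIcc_of_le hcmem.1]
      exact hG'cont.mono (Icc_subset_Icc le_rfl hcmem.2)
    have hintH : ∀ a b : ℝ, a ∈ Icc (0:ℝ) L → b ∈ Icc (0:ℝ) L →
        IntervalIntegrable H volume a b := by
      intro a b ha hb
      apply ContinuousOn.intervalIntegrable
      exact hHcont.mono (uIcc_subset_Icc ha hb)
    have hftc := intervalIntegral.integral_eq_sub_of_hasDeriv_right_of_le hcmem.1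
        (hgcont.mono (Icc_subset_Icc le_rfl hcmem.2))
        (fun x hx => ((hgderiv x ⟨hx.1, lt_of_lt_of_le hx.2 hcmem.2⟩).hasDerivWithinAt))
        hintG'
    have hg00 : g 0 = 0 := by
      have h0 : (0:ℝ) ∉ Ω₀ := fun h => (lt_irrefl 0 (hΩsub h).1)
      rw [hgdef]
      simp only
      rw [hψzero 0 h0]
      norm_num
    have hSeq : S = ∫ y in (0:ℝ)..c, G' y := by rw [hftc, hg00, sub_zero]
    have hG'H : ∀ x ∈ Icc 0 L, G' x ≤ H x := by
      intro x hx
      have hd : |deriv φ x| ≤ Cφ * ψ x := hφd x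
      have h1 : |(deriv φ x * (4/3) * ψ x) * u x ^ 2| ≤ 4/3 * Cφ * (ψ x ^ 2 * u x ^ 2) := by
        rw [abs_mul, abs_mul, abs_mul]
        rw [abs_of_nonneg (hψ0 x), abs_of_nonneg (sq_nonneg (u x))]
        have h43 : |(4:ℝ)/3| = 4/3 := by norm_num
        rw [h43]
        have hmul := mul_le_mul_of_nonneg_right hd
          (mul_nonneg (by norm_num : (0:ℝ) ≤ 4/3) (mul_nonneg (hψ0 x) (sq_nonneg (u x))))
        nlinarith [hmul]
      have h2 : |ψ x ^ 4 * (2 * u x * u' x)| = 2 * (ψ x ^ 4 * (|u x| * |u' x|)) := by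
        rw [abs_mul, abs_of_nonneg (pow_nonneg (hψ0 x) 4), abs_mul, abs_mul]
        norm_num
        ring
      calc G' x ≤ |G' x| := le_abs_self _
        _ ≤ |(deriv φ x * (4/3) * ψ x) * u x ^ 2| + |ψ x ^ 4 * (2 * u x * u' x)| := abs_add_le _ _
        _ ≤ H x := by rw [hHdef]; simp only; linarith
    have h5 : (∫ y in (0:ℝ)..c, G' y) ≤ ∫ y in (0:ℝ)..c, H y :=
      intervalIntegral.integral_mono_on hcmem.1 hintG' (hintH 0 c (left_mem_Icc.2 hL.le) hcmem)
        (fun x hx => hG'H x ⟨hx.1, le_trans hx.2 hcmem.2⟩)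
    have h6 : (∫ y in (0:ℝ)..c, H y) ≤ ∫ y in (0:ℝ)..L, H y := by
      have hadd := intervalIntegral.integral_add_adjacent_intervals
        (hintH 0 c (left_mem_Icc.2 hL.le) hcmem) (hintH c L hcmem (right_mem_Icc.2 hL.le))
      have hpos : 0 ≤ ∫ y in c..L, H y :=
        intervalIntegral.integral_nonneg hcmem.2 (fun x _ => hH0 x)
      linarith
    have h7 : (∫ y in (0:ℝ)..L, H y) = 4/3 * Cφ * A + 2 * B := by
      rw [intervalIntegral.integral_of_le hL.le, integral_Ioc_eq_integral_Ioo]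
      rw [hHdef]
      rw [integral_add ((intA.const_mul _)) ((intB.const_mul _)),
        integral_const_mul, integral_const_mul]
    rw [hSeq]
    linarith [h5, h6, h7.le]
  -- B ≤ ε D + A/(4ε)
  have hB_le : ∀ ε > 0, B ≤ ε * D + A / (4 * ε) := by
    intro ε hε
    have hpt : ∀ x ∈ Ioo 0 L, ψ x ^ 4 * (|u x| * |u' x|)
        ≤ ε * ((φ x) ^ 2 * |u' x| ^ 2) + (1/(4*ε)) * (ψ x ^ 2 * u x ^ 2) := by
      intro x hx
      rw [hψ6 x]
      exact aux_young (u x) (u' x) (ψ x) ε (hψ0 x) hε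
    calc B ≤ ∫ x in Ioo 0 L,
          (ε * ((φ x) ^ 2 * |u' x| ^ 2) + (1/(4*ε)) * (ψ x ^ 2 * u x ^ 2)) :=
          by
          have hint2 : IntegrableOn
              (fun x => ε * ((φ x) ^ 2 * |u' x| ^ 2) + (1/(4*ε)) * (ψ x ^ 2 * u x ^ 2))
              (Ioo 0 L) := (intD.const_mul ε).add (intA.const_mul (1/(4*ε)))
          exact setIntegral_mono_on intB hint2 measurableSet_Ioo hpt
      _ = ε * D + (1/(4*ε)) * A := by
          rw [integral_add ((intD.const_mul ε)) ((intA.const_mul _)),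
            integral_const_mul, integral_const_mul]
      _ = ε * D + A / (4 * ε) := by ring
  -- main ε-inequality
  have hmain : ∀ ε > 0, σ ^ 2 ≤ 4/3 * Cφ * σ * N + 2 * ε * D + σ * N / (2 * ε) := by
    intro ε hε
    have h1 := hB_le ε hε
    have h2 : A / (4 * ε) ≤ σ * N / (4 * ε) := by gcongr
    have h3 : 4/3 * Cφ * A ≤ 4/3 * Cφ * (σ * N) :=
      mul_le_mul_of_nonneg_left hA_le (by positivity)
    have hσS : σ ^ 2 ≤ 4/3 * Cφ * A + 2 * B := by rw [hσ2]; exact hS_AB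
    have h4 : σ * N / (2 * ε) = 2 * (σ * N / (4 * ε)) := by ring
    linarith
  -- conclude σ^3 bound
  have hσ3 : σ ^ 3 ≤ 64 * Cφ ^ 3 * N ^ 3 + 10 * (D * N) := by
    rcases eq_or_lt_of_le hD0 with hD | hD
    · -- D = 0
      have hc0 : σ ^ 2 - 4/3 * Cφ * σ * N ≤ 0 := by
        apply aux_le_zero _ (σ * N / 2) (by positivity)
        intro ε hε
        have h := hmain ε hε
        rw [← hD] at h
        have heq : σ * N / (2 * ε) = (σ * N / 2) / ε := by ring
        linarith [h, heq]
      rcases eq_or_lt_of_le hσ0 with hσz | hσp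
      · rw [← hσz, ← hD]
        nlinarith [pow_nonneg hN0 3, pow_pos hCφ 3]
      · have hσle : σ ≤ 4/3 * Cφ * N := by nlinarith
        have h2 := pow_le_pow_left₀ hσ0 hσle 3
        rw [← hD]
        nlinarith
    · -- D > 0
      rcases eq_or_lt_of_le hσ0 with hσz | hσp
      · rw [← hσz]
        nlinarith [pow_nonneg hN0 3, pow_pos hCφ 3, mul_nonneg hD0 hN0]
      · have hε : (0:ℝ) < σ ^ 2 / (8 * D) := by positivity
        have h := hmain _ hε
        have h2 : 2 * (σ ^ 2 / (8 * D)) * D = σ ^ 2 / 4 := by field_simp; ring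
        have h3 : σ * N / (2 * (σ ^ 2 / (8 * D))) = 4 * D * N / σ := by
          field_simp
          ring
        rw [h2, h3] at h
        have h4 : σ ^ 3 ≤ 4/3 * Cφ * N * σ ^ 2 + σ ^ 3 / 4 + 4 * D * N := by
          have h5 := mul_le_mul_of_nonneg_right h hσ0
          have h6 : 4 * D * N / σ * σ = 4 * D * N := div_mul_cancel₀ _ hσp.ne'
          calc σ ^ 3 = σ ^ 2 * σ := by ring
            _ ≤ (4/3 * Cφ * σ * N + σ ^ 2 / 4 + 4 * D * N / σ) * σ := h5
            _ = 4/3 * Cφ * N * σ ^ 2 + σ ^ 3 / 4 + (4 * D * N / σ) * σ := by ring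
            _ = 4/3 * Cφ * N * σ ^ 2 + σ ^ 3 / 4 + 4 * D * N := by rw [h6]
        exact aux_alg σ Cφ N D hσ0 hCφ hN0 hD0 h4
  calc (∫ x in Ioo 0 L, (φ x) ^ 2 * |u x| ^ 4) ≤ σ ^ 3 * N := hI_le
    _ ≤ (64 * Cφ ^ 3 * N ^ 3 + 10 * (D * N)) * N :=
        mul_le_mul_of_nonneg_right hσ3 hN0
    _ ≤ 64 * N ^ 2 * (D + Cφ ^ 3 * N ^ 2) := by nlinarith [mul_nonneg hD0 hN0, hN0, hD0]
end

section
/- Let Ω₀ ⊂ ℝ be a bounded measurable set, φ : ℝ → [0,1] smooth with support in Ω₀ and |φ'| ≤ C_φ φ^{1/3} pointwise, and u ∈ C¹(ℝ). Then ‖φ^{2/3} u‖_{L^∞(ℝ)}² ≤ C ( ‖u‖_{L¹(Ω₀)}^{2/3} ‖φ u'‖_{L²(Ω₀)}^{4/3} + C_φ² ‖u‖_{L¹(Ω₀)}² ) for a universal constant C > 0 independent of φ, Ω₀ and u. -/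
open MeasureTheory Set

set_option maxHeartbeats 1000000 in
private lemma amgm4' {n m : ℝ} (hn : 0 ≤ n) (hm : 0 ≤ m) : 4*(n*m^3) ≤ n^4 + 3*m^4 := by
  nlinarith [mul_nonneg (sq_nonneg (n-m)) (by nlinarith [sq_nonneg (n+m), sq_nonneg m] : (0:ℝ) ≤ n^2+2*n*m+3*m^2)]

set_option maxHeartbeats 1000000 in
private lemma alg' {N B D c : ℝ} (hN : 0 ≤ N) (hB : 0 ≤ B) (hD : 0 ≤ D) (hc : 0 ≤ c)
    (h : ∀ t : ℝ, 0 < t → N ≤ (4/3)*c*B*N^((1:ℝ)/2) + N^((1:ℝ)/4)*(t*B + D/t)) :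
    N ≤ 8*(B^((2:ℝ)/3)*D^((2:ℝ)/3) + c^2*B^2) := by
  set n := N ^ ((1:ℝ)/4) with hn_def
  have hn : 0 ≤ n := Real.rpow_nonneg hN _
  have hn4 : n^4 = N := by
    rw [hn_def, ← Real.rpow_natCast (N ^ ((1:ℝ)/4)) 4, ← Real.rpow_mul hN]
    norm_num
  have hn2 : N ^ ((1:ℝ)/2) = n^2 := by
    rw [hn_def, ← Real.rpow_natCast (N ^ ((1:ℝ)/4)) 2, ← Real.rpow_mul hN]
    norm_num
  clear_value n
  have hRHSnonneg : 0 ≤ 8*(B^((2:ℝ)/3)*D^((2:ℝ)/3) + c^2*B^2) := by positivity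
  rcases eq_or_lt_of_le hB with hB0 | hBpos
  · -- B = 0
    have hN0 : N ≤ 0 := by
      refine le_of_forall_pos_le_add (fun ε hε => ?_)
      have ht : (0:ℝ) < n*D/ε + 1 := by positivity
      have := h _ ht
      rw [← hB0] at this
      have h2 : n * (D / (n*D/ε + 1)) ≤ ε := by
        rw [← mul_div_assoc, div_le_iff₀ ht]
        have he : ε * (n*D/ε + 1) = n*D + ε := by field_simp
        nlinarith [he]
      calc N ≤ (4/3)*c*0*N^((1:ℝ)/2) + n*((n*D/ε+1)*0 + D/(n*D/ε+1)) := this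
        _ = n * (D / (n*D/ε + 1)) := by ring
        _ ≤ ε := h2
        _ = 0 + ε := by ring
    linarith
  · rcases eq_or_lt_of_le hD with hD0 | hDpos
    · -- D = 0
      have key : N ≤ (4/3)*c*B*n^2 := by
        refine le_of_forall_pos_le_add (fun ε hε => ?_)
        have ht : (0:ℝ) < ε/(n*B+1) := by positivity
        have := h _ ht
        rw [← hD0, hn2] at this
        have h2 : n * (ε/(n*B+1)*B + 0/(ε/(n*B+1))) ≤ ε := by
          rw [zero_div, add_zero, div_mul_eq_mul_div, ← mul_div_assoc,
            div_le_iff₀ (by positivity : (0:ℝ) < n*B+1)]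
          nlinarith [mul_nonneg (mul_nonneg hn hε.le) hB]
        linarith
      have : n^4 ≤ (4/3)*c*B*n^2 := by rw [hn4]; exact key
      have h2 : n^4 ≤ ((4/3)*c*B)^2 := by
        nlinarith [sq_nonneg (n^2 - (4/3)*c*B), sq_nonneg n, mul_nonneg (mul_nonneg hc hBpos.le) (sq_nonneg n)]
      have : N ≤ (16/9)*c^2*B^2 := by rw [← hn4]; nlinarith
      nlinarith [Real.rpow_nonneg hB ((2:ℝ)/3), Real.rpow_nonneg hD ((2:ℝ)/3),
        mul_nonneg (Real.rpow_nonneg hB ((2:ℝ)/3)) (Real.rpow_nonneg hD ((2:ℝ)/3)), sq_nonneg (c*B)]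
    · -- B, D > 0
      set m := (B*D) ^ ((1:ℝ)/6) with hm_def
      have hm : 0 < m := Real.rpow_pos_of_pos (mul_pos hBpos hDpos) _
      have hm6 : m^6 = B*D := by
        rw [hm_def, ← Real.rpow_natCast ((B*D) ^ ((1:ℝ)/6)) 6, ← Real.rpow_mul (mul_pos hBpos hDpos).le]
        norm_num
      have hm4 : m^4 = B^((2:ℝ)/3)*D^((2:ℝ)/3) := by
        rw [← Real.mul_rpow hB hD, hm_def, ← Real.rpow_natCast ((B*D) ^ ((1:ℝ)/6)) 4,
          ← Real.rpow_mul (mul_pos hBpos hDpos).le]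
        norm_num
      clear_value m
      have ht : (0:ℝ) < m^3/B := by positivity
      have := h _ ht
      rw [hn2] at this
      have hm3 : m^3 ≠ 0 := by positivity
      have harith : m^3/B*B + D/(m^3/B) = 2*m^3 := by
        rw [div_mul_cancel₀ _ hBpos.ne']
        have h2 : D / (m^3/B) = m^3 := by
          rw [div_div_eq_mul_div, show D * B = m^3 * m^3 from by linear_combination (-1:ℝ)*hm6,
            mul_div_assoc, div_self hm3, mul_one]
        rw [h2]; ring
      rw [harith] at this
      have key : n^4 ≤ (4/3)*c*B*n^2 + 2*(n*m^3) := by rw [hn4]; linarith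
      have hyoung := amgm4' hn hm.le
      have hyoung2 : (4/3)*c*B*n^2 ≤ n^4/4 + (4/3*c*B)^2 := by nlinarith [sq_nonneg (n^2/2 - (4/3)*c*B)]
      have : n^4 ≤ (64/9)*c^2*B^2 + 6*m^4 := by nlinarith
      rw [← hn4, ← hm4]
      nlinarith [mul_nonneg (Real.rpow_nonneg hB ((2:ℝ)/3)) (Real.rpow_nonneg hD ((2:ℝ)/3))]

private lemma contIntegrableOn' {Ω : Set ℝ} (hb : Bornology.IsBounded Ω) {f : ℝ → ℝ}
    (hf : Continuous f) : IntegrableOn f Ω := by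
  exact (hf.continuousOn.integrableOn_compact hb.isCompact_closure).mono_set subset_closure

set_option maxHeartbeats 1600000 in
theorem stmt_4 :
    ∃ C > (0:ℝ), ∀ (Ω₀ : Set ℝ), MeasurableSet Ω₀ → Bornology.IsBounded Ω₀ →
      ∀ (φ : ℝ → ℝ) (Cφ : ℝ), 0 < Cφ → ContDiff ℝ (⊤ : ℕ∞) φ →
        (∀ x, φ x ∈ Icc (0:ℝ) 1) → Function.support φ ⊆ Ω₀ →
        (∀ x, |deriv φ x| ≤ Cφ * (φ x) ^ ((1:ℝ)/3)) →
        ∀ u : ℝ → ℝ, ContDiff ℝ 1 u →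
          ∀ x : ℝ, ((φ x) ^ ((2:ℝ)/3) * u x) ^ 2
            ≤ C * ((∫ y in Ω₀, |u y|) ^ ((2:ℝ)/3)
                    * (∫ y in Ω₀, (φ y * deriv u y) ^ 2) ^ ((2:ℝ)/3)
                  + Cφ ^ 2 * (∫ y in Ω₀, |u y|) ^ 2) := by
  refine ⟨8, by norm_num, ?_⟩
  intro Ω₀ hΩm hΩb φ Cφ hCφ hφC hφI hφs hφd u hu x
  have hφ0 : ∀ y, 0 ≤ φ y := fun y => (hφI y).1
  have hφzero : ∀ y, y ∉ Ω₀ → φ y = 0 := fun y hy => by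
    by_contra hne
    exact hy (hφs (Function.mem_support.2 hne))
  set B := ∫ y in Ω₀, |u y| with hB_def
  set D := ∫ y in Ω₀, (φ y * deriv u y)^2 with hD_def
  have hB : 0 ≤ B := integral_nonneg (fun y => abs_nonneg _)
  have hD : 0 ≤ D := integral_nonneg (fun y => sq_nonneg _)
  -- the localized function g and its derivative
  have hφdiff : ∀ y, HasDerivAt φ (deriv φ y) y := fun y => ((hφC.differentiable (by simp)) y).hasDerivAt
  have hudiff : ∀ y, HasDerivAt u (deriv u y) y := fun y => ((hu.differentiable one_ne_zero) y).hasDerivAt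
  set g : ℝ → ℝ := fun y => φ y ^ ((4:ℝ)/3) * (u y)^2 with hg_def
  set g' : ℝ → ℝ := fun y =>
    deriv φ y * (4/3) * φ y ^ ((1:ℝ)/3) * (u y)^2 + φ y ^ ((4:ℝ)/3) * (2 * u y * deriv u y)
    with hg'_def
  have hgderiv : ∀ y, HasDerivAt g (g' y) y := by
    intro y
    have h43 : (4:ℝ)/3 - 1 = 1/3 := by norm_num
    have h1 : HasDerivAt (fun z => φ z ^ ((4:ℝ)/3)) (deriv φ y * (4/3) * φ y ^ ((1:ℝ)/3)) y := by
      have := (hφdiff y).rpow_const (p := (4:ℝ)/3) (Or.inr (by norm_num))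
      rwa [h43] at this
    have h2 : HasDerivAt (fun z => (u z)^2) (2 * u y * deriv u y) y := by
      simpa using (hudiff y).fun_pow 2
    exact h1.mul h2
  have hgnn : ∀ y, 0 ≤ g y := fun y => mul_nonneg (Real.rpow_nonneg (hφ0 y) _) (sq_nonneg _)
  have hgcont : Continuous g :=
    (hφC.continuous.rpow_const (fun y => Or.inr (by norm_num))).mul (hu.continuous.pow 2)
  have hgzero : ∀ y, y ∉ Ω₀ → g y = 0 := by
    intro y hy
    simp only [hg_def, hφzero y hy, Real.zero_rpow (by norm_num : (4:ℝ)/3 ≠ 0), zero_mul]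
  have hgcs : HasCompactSupport g :=
    HasCompactSupport.intro hΩb.isCompact_closure (fun y hy => hgzero y (fun h => hy (subset_closure h)))
  obtain ⟨x₀, hx₀⟩ := hgcont.exists_forall_ge_of_hasCompactSupport hgcs
  set N := g x₀ with hN_def
  have hN0 : 0 ≤ N := hgnn x₀
  clear_value N
  -- pointwise sup bounds
  have hsq : ∀ y, (φ y ^ ((2:ℝ)/3) * |u y|)^2 = g y := by
    intro y
    rw [mul_pow, ← Real.rpow_natCast (φ y ^ ((2:ℝ)/3)) 2, ← Real.rpow_mul (hφ0 y), sq_abs]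
    norm_num [hg_def]
  have hsup1 : ∀ y, φ y ^ ((2:ℝ)/3) * |u y| ≤ N ^ ((1:ℝ)/2) := by
    intro y
    have h2 : (φ y ^ ((2:ℝ)/3) * |u y|)^2 ≤ N := (hsq y) ▸ hx₀ y
    have h3 : 0 ≤ φ y ^ ((2:ℝ)/3) * |u y| := mul_nonneg (Real.rpow_nonneg (hφ0 y) _) (abs_nonneg _)
    calc φ y ^ ((2:ℝ)/3) * |u y| = ((φ y ^ ((2:ℝ)/3) * |u y|)^2) ^ ((1:ℝ)/2) := by
          rw [← Real.rpow_natCast (φ y ^ ((2:ℝ)/3) * |u y|) 2, ← Real.rpow_mul h3]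
          norm_num
      _ ≤ N ^ ((1:ℝ)/2) := Real.rpow_le_rpow (sq_nonneg _) h2 (by norm_num)
  have hsup2 : ∀ y, φ y ^ ((1:ℝ)/3) * |u y| ^ ((1:ℝ)/2) ≤ N ^ ((1:ℝ)/4) := by
    intro y
    have heq : φ y ^ ((1:ℝ)/3) * |u y| ^ ((1:ℝ)/2) = (φ y ^ ((2:ℝ)/3) * |u y|) ^ ((1:ℝ)/2) := by
      rw [Real.mul_rpow (Real.rpow_nonneg (hφ0 y) _) (abs_nonneg _), ← Real.rpow_mul (hφ0 y)]
      norm_num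
    rw [heq]
    calc (φ y ^ ((2:ℝ)/3) * |u y|) ^ ((1:ℝ)/2)
        ≤ (N ^ ((1:ℝ)/2)) ^ ((1:ℝ)/2) :=
          Real.rpow_le_rpow (mul_nonneg (Real.rpow_nonneg (hφ0 y) _) (abs_nonneg _)) (hsup1 y) (by norm_num)
      _ = N ^ ((1:ℝ)/4) := by rw [← Real.rpow_mul hN0]; norm_num
  -- choose a point a to the left of everything
  obtain ⟨R, hR⟩ := hΩb.subset_closedBall 0
  set a : ℝ := min x₀ (-(|R|+1)) with ha_def
  have hax : a ≤ x₀ := min_le_left _ _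
  have haΩ : a ∉ Ω₀ := by
    intro h
    have h1 := hR h
    rw [Metric.mem_closedBall, Real.dist_eq, sub_zero] at h1
    have h2 := abs_le.mp h1
    have h3 : a ≤ -(|R|+1) := min_le_right _ _
    have := le_abs_self R
    linarith [h2.1]
  have hga : g a = 0 := hgzero a haΩ
  -- continuity and support of g'
  have hdφc : Continuous (deriv φ) := hφC.continuous_deriv (by simp)
  have hduc : Continuous (deriv u) := hu.continuous_deriv le_rfl
  have hg'cont : Continuous g' := by
    apply Continuous.add
    · exact ((hdφc.mul continuous_const).mul
        (hφC.continuous.rpow_const (fun y => Or.inr (by norm_num)))).mul (hu.continuous.pow 2)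
    · exact (hφC.continuous.rpow_const (fun y => Or.inr (by norm_num))).mul
        ((continuous_const.mul hu.continuous).mul hduc)
  have hg'zero : ∀ y, y ∉ Ω₀ → g' y = 0 := by
    intro y hy
    simp only [hg'_def, hφzero y hy, Real.zero_rpow (by norm_num : (1:ℝ)/3 ≠ 0),
      Real.zero_rpow (by norm_num : (4:ℝ)/3 ≠ 0), mul_zero, zero_mul, add_zero]
  have hg'cs : HasCompactSupport g' :=
    HasCompactSupport.intro hΩb.isCompact_closure (fun y hy => hg'zero y (fun h => hy (subset_closure h)))
  have habs : Integrable (fun y => |g' y|) := (hg'cont.abs).integrable_of_hasCompactSupport hg'cs.abs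
  -- fundamental theorem of calculus
  have hfund : g x₀ = ∫ y in a..x₀, g' y := by
    have h := intervalIntegral.integral_eq_sub_of_hasDerivAt (f := g) (f' := g')
      (fun y _ => hgderiv y) (hg'cont.intervalIntegrable a x₀)
    rw [h, hga, sub_zero]
  have step1 : N ≤ ∫ y in Ω₀, |g' y| := by
    rw [hN_def, hfund]
    calc (∫ y in a..x₀, g' y) ≤ |∫ y in a..x₀, g' y| := le_abs_self _
      _ ≤ ∫ y in a..x₀, |g' y| := intervalIntegral.abs_integral_le_integral_abs hax
      _ = ∫ y in Set.Ioc a x₀, |g' y| := intervalIntegral.integral_of_le hax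
      _ ≤ ∫ y, |g' y| := setIntegral_le_integral habs (Filter.Eventually.of_forall fun y => abs_nonneg _)
      _ = ∫ y in Ω₀, |g' y| := by
          refine (setIntegral_eq_integral_of_forall_compl_eq_zero (fun y hy => ?_)).symm
          rw [hg'zero y hy, abs_zero]
  -- integrability of the comparison functions
  have hInt1 : IntegrableOn (fun y => |u y|) Ω₀ := contIntegrableOn' hΩb hu.continuous.abs
  have hInt2 : IntegrableOn (fun y => (φ y * deriv u y)^2) Ω₀ :=
    contIntegrableOn' hΩb ((hφC.continuous.mul hduc).pow 2)
  -- main inequality for each t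
  have hmain : ∀ t : ℝ, 0 < t → N ≤ (4/3)*Cφ*B*N^((1:ℝ)/2) + N^((1:ℝ)/4)*(t*B + D/t) := by
    intro t ht
    have hpt : ∀ y, |g' y| ≤ ((4/3)*Cφ*N^((1:ℝ)/2) + N^((1:ℝ)/4)*t) * |u y|
        + (N^((1:ℝ)/4)/t) * (φ y * deriv u y)^2 := by
      intro y
      have hrp13 : (0:ℝ) ≤ φ y ^ ((1:ℝ)/3) := Real.rpow_nonneg (hφ0 y) _
      have hrp43 : (0:ℝ) ≤ φ y ^ ((4:ℝ)/3) := Real.rpow_nonneg (hφ0 y) _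
      have e1 : |deriv φ y * (4/3) * φ y ^ ((1:ℝ)/3) * (u y)^2|
          = |deriv φ y| * (4/3) * φ y ^ ((1:ℝ)/3) * (u y)^2 := by
        rw [abs_mul, abs_mul, abs_mul, abs_of_nonneg hrp13, abs_of_nonneg (sq_nonneg (u y)),
          abs_of_pos (by norm_num : (0:ℝ) < 4/3)]
      have e2 : |φ y ^ ((4:ℝ)/3) * (2 * u y * deriv u y)|
          = φ y ^ ((4:ℝ)/3) * (2 * |u y| * |deriv u y|) := by
        rw [abs_mul, abs_of_nonneg hrp43, abs_mul, abs_mul, abs_of_pos (by norm_num : (0:ℝ) < 2)]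
      have hq13 : φ y ^ ((1:ℝ)/3) * φ y ^ ((1:ℝ)/3) = φ y ^ ((2:ℝ)/3) := by
        rw [← Real.rpow_add' (hφ0 y) (by norm_num : (1:ℝ)/3 + 1/3 ≠ 0)]
        norm_num
      have hu2 : (u y)^2 = |u y| * |u y| := by rw [sq, ← abs_mul_abs_self]
      have b1 : |deriv φ y| * (4/3) * φ y ^ ((1:ℝ)/3) * (u y)^2
          ≤ (4/3)*Cφ*N^((1:ℝ)/2) * |u y| := by
        have h1 : |deriv φ y| * (4/3) * φ y ^ ((1:ℝ)/3) * (u y)^2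
            ≤ (Cφ * φ y ^ ((1:ℝ)/3)) * (4/3) * φ y ^ ((1:ℝ)/3) * (u y)^2 := by
          gcongr
          exact hφd y
        have h2 : (Cφ * φ y ^ ((1:ℝ)/3)) * (4/3) * φ y ^ ((1:ℝ)/3) * (u y)^2
            = (4/3)*Cφ*((φ y ^ ((2:ℝ)/3) * |u y|) * |u y|) := by
          rw [hu2, ← hq13]; ring
        have h3 : (4/3)*Cφ*((φ y ^ ((2:ℝ)/3) * |u y|) * |u y|)
            ≤ (4/3)*Cφ*(N^((1:ℝ)/2) * |u y|) :=
          mul_le_mul_of_nonneg_left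
            (mul_le_mul_of_nonneg_right (hsup1 y) (abs_nonneg _))
            (by positivity)
        calc |deriv φ y| * (4/3) * φ y ^ ((1:ℝ)/3) * (u y)^2
            ≤ (Cφ * φ y ^ ((1:ℝ)/3)) * (4/3) * φ y ^ ((1:ℝ)/3) * (u y)^2 := h1
          _ = (4/3)*Cφ*((φ y ^ ((2:ℝ)/3) * |u y|) * |u y|) := h2
          _ ≤ (4/3)*Cφ*(N^((1:ℝ)/2) * |u y|) := h3
          _ = (4/3)*Cφ*N^((1:ℝ)/2) * |u y| := by ring
      have hab : |u y| ^ ((1:ℝ)/2) * |u y| ^ ((1:ℝ)/2) = |u y| := by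
        rw [← Real.rpow_add' (abs_nonneg _) (by norm_num : (1:ℝ)/2 + 1/2 ≠ 0)]
        norm_num
      have hpp : φ y ^ ((1:ℝ)/3) * φ y = φ y ^ ((4:ℝ)/3) := by
        nth_rewrite 2 [← Real.rpow_one (φ y)]
        rw [← Real.rpow_add' (hφ0 y) (by norm_num : (1:ℝ)/3 + 1 ≠ 0)]
        norm_num
      have b2 : φ y ^ ((4:ℝ)/3) * (2 * |u y| * |deriv u y|)
          ≤ N^((1:ℝ)/4) * (t * |u y| + (φ y * deriv u y)^2 / t) := by
        have hsplit : φ y ^ ((4:ℝ)/3) * (2 * |u y| * |deriv u y|)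
            = 2 * ((φ y ^ ((1:ℝ)/3) * |u y| ^ ((1:ℝ)/2)) * (|u y| ^ ((1:ℝ)/2) * (φ y * |deriv u y|))) := by
          have : 2 * ((φ y ^ ((1:ℝ)/3) * |u y| ^ ((1:ℝ)/2)) * (|u y| ^ ((1:ℝ)/2) * (φ y * |deriv u y|)))
              = (φ y ^ ((1:ℝ)/3) * φ y) * (2 * (|u y| ^ ((1:ℝ)/2) * |u y| ^ ((1:ℝ)/2)) * |deriv u y|) := by
            ring
          rw [this, hpp, hab]
          try ring
        have hYnn : 0 ≤ |u y| ^ ((1:ℝ)/2) * (φ y * |deriv u y|) :=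
          mul_nonneg (Real.rpow_nonneg (abs_nonneg _) _) (mul_nonneg (hφ0 y) (abs_nonneg _))
        have hstep : 2 * ((φ y ^ ((1:ℝ)/3) * |u y| ^ ((1:ℝ)/2)) * (|u y| ^ ((1:ℝ)/2) * (φ y * |deriv u y|)))
            ≤ 2 * (N^((1:ℝ)/4) * (|u y| ^ ((1:ℝ)/2) * (φ y * |deriv u y|))) := by
          have := mul_le_mul_of_nonneg_right (hsup2 y) hYnn
          linarith
        have ha2 : (|u y| ^ ((1:ℝ)/2))^2 = |u y| := by
          rw [sq, hab]
        have hb2 : (φ y * |deriv u y|)^2 = (φ y * deriv u y)^2 := by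
          rw [mul_pow, mul_pow, sq_abs]
        have hyoung : 2 * (|u y| ^ ((1:ℝ)/2) * (φ y * |deriv u y|))
            ≤ t * |u y| + (φ y * deriv u y)^2 / t := by
          have h0 : 2 * (|u y| ^ ((1:ℝ)/2) * (φ y * |deriv u y|))
              ≤ t * (|u y| ^ ((1:ℝ)/2))^2 + (φ y * |deriv u y|)^2 / t := by
            have hdm := div_mul_cancel₀ ((φ y * |deriv u y|)^2) ht.ne'
            nlinarith [sq_nonneg (t * (|u y| ^ ((1:ℝ)/2)) - φ y * |deriv u y|), ht,
              mul_pos ht ht, hdm]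
          rwa [ha2, hb2] at h0
        calc φ y ^ ((4:ℝ)/3) * (2 * |u y| * |deriv u y|)
            = 2 * ((φ y ^ ((1:ℝ)/3) * |u y| ^ ((1:ℝ)/2)) * (|u y| ^ ((1:ℝ)/2) * (φ y * |deriv u y|))) := hsplit
          _ ≤ 2 * (N^((1:ℝ)/4) * (|u y| ^ ((1:ℝ)/2) * (φ y * |deriv u y|))) := hstep
          _ = N^((1:ℝ)/4) * (2 * (|u y| ^ ((1:ℝ)/2) * (φ y * |deriv u y|))) := by ring
          _ ≤ N^((1:ℝ)/4) * (t * |u y| + (φ y * deriv u y)^2 / t) :=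
              mul_le_mul_of_nonneg_left hyoung (Real.rpow_nonneg hN0 _)
      calc |g' y| ≤ |deriv φ y * (4/3) * φ y ^ ((1:ℝ)/3) * (u y)^2|
            + |φ y ^ ((4:ℝ)/3) * (2 * u y * deriv u y)| := abs_add_le _ _
        _ = |deriv φ y| * (4/3) * φ y ^ ((1:ℝ)/3) * (u y)^2
            + φ y ^ ((4:ℝ)/3) * (2 * |u y| * |deriv u y|) := by rw [e1, e2]
        _ ≤ (4/3)*Cφ*N^((1:ℝ)/2) * |u y|
            + N^((1:ℝ)/4) * (t * |u y| + (φ y * deriv u y)^2 / t) := add_le_add b1 b2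
        _ = ((4/3)*Cφ*N^((1:ℝ)/2) + N^((1:ℝ)/4)*t) * |u y|
            + (N^((1:ℝ)/4)/t) * (φ y * deriv u y)^2 := by ring
    have hIa : Integrable (fun y => ((4/3)*Cφ*N^((1:ℝ)/2) + N^((1:ℝ)/4)*t) * |u y|)
        (volume.restrict Ω₀) := hInt1.const_mul _
    have hIb : Integrable (fun y => (N^((1:ℝ)/4)/t) * (φ y * deriv u y)^2)
        (volume.restrict Ω₀) := hInt2.const_mul _
    have hcmp : ∫ y in Ω₀, |g' y|
        ≤ ∫ y in Ω₀, (((4/3)*Cφ*N^((1:ℝ)/2) + N^((1:ℝ)/4)*t) * |u y|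
            + (N^((1:ℝ)/4)/t) * (φ y * deriv u y)^2) :=
      integral_mono habs.integrableOn (hIa.add hIb) hpt
    have heq : ∫ y in Ω₀, (((4/3)*Cφ*N^((1:ℝ)/2) + N^((1:ℝ)/4)*t) * |u y|
            + (N^((1:ℝ)/4)/t) * (φ y * deriv u y)^2)
        = ((4/3)*Cφ*N^((1:ℝ)/2) + N^((1:ℝ)/4)*t) * B + (N^((1:ℝ)/4)/t) * D := by
      rw [integral_add hIa hIb, integral_const_mul, integral_const_mul, hB_def, hD_def]
    calc N ≤ ∫ y in Ω₀, |g' y| := step1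
      _ ≤ _ := hcmp
      _ = ((4/3)*Cφ*N^((1:ℝ)/2) + N^((1:ℝ)/4)*t) * B + (N^((1:ℝ)/4)/t) * D := heq
      _ = (4/3)*Cφ*B*N^((1:ℝ)/2) + N^((1:ℝ)/4)*(t*B + D/t) := by ring
  have hfinal := alg' hN0 hB hD hCφ.le hmain
  have hx : ((φ x) ^ ((2:ℝ)/3) * u x) ^ 2 = (φ x ^ ((2:ℝ)/3) * |u x|)^2 := by
    rw [mul_pow, mul_pow, sq_abs]
  calc ((φ x) ^ ((2:ℝ)/3) * u x) ^ 2 = g x := by rw [hx, hsq x]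
    _ ≤ N := hx₀ x
    _ ≤ 8*(B^((2:ℝ)/3)*D^((2:ℝ)/3) + Cφ^2*B^2) := hfinal
end

section
/- Let Ω = (0,L), and let z, w : Ω × [τ,T] → ℝ be smooth with ∂_t z = ∂_{xx} w on Ω × (τ,T) and ∂_x w = 0 on ∂Ω. Suppose Y(x,t) := ∂_x ∫_τ^t w(x,s) ds satisfies |Y(x,T) - Y(x,t)| ≤ K |T-t|^γ for all x ∈ Ω, t ∈ [τ,T], with K > 0 and γ ∈ (0,1). Let φ be a smooth test function supported in Ω with ‖φ'‖_{L¹(Ω)} ≤ C_φ. Then (T-τ) ∫_Ω z(x,T) φ(x) dx ≤ ∫_τ^T ∫_Ω z(x,t) φ(x) dx dt + (C_φ K / (1+γ)) |T-τ|^{1+γ}. -/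
open MeasureTheory Set intervalIntegral Filter

namespace Stmt9

/-- partial derivative in the first coordinate, within `S`. -/
noncomputable def P1 (f : ℝ → ℝ → ℝ) (S : Set (ℝ × ℝ)) (x t : ℝ) : ℝ :=
  fderivWithin ℝ (fun q : ℝ × ℝ => f q.1 q.2) S (x, t) (1, 0)

/-- partial derivative in the second coordinate, within `S`. -/
noncomputable def P2 (f : ℝ → ℝ → ℝ) (S : Set (ℝ × ℝ)) (x t : ℝ) : ℝ :=
  fderivWithin ℝ (fun q : ℝ × ℝ => f q.1 q.2) S (x, t) (0, 1)

variable {a b c d : ℝ} {f : ℝ → ℝ → ℝ}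

lemma cont_intervalIntegrable {g : ℝ → ℝ} (hab : a ≤ b) (h : ContinuousOn g (Icc a b)) :
    IntervalIntegrable g volume a b :=
  ContinuousOn.intervalIntegrable (by rwa [uIcc_of_le hab])

lemma uds (hab : a < b) (hcd : c < d) : UniqueDiffOn ℝ (Icc a b ×ˢ Icc c d) :=
  (uniqueDiffOn_Icc hab).prod (uniqueDiffOn_Icc hcd)

lemma contDiffOn_P1 (hab : a < b) (hcd : c < d)
    (hf : ContDiffOn ℝ (⊤ : ℕ∞) (fun q : ℝ × ℝ => f q.1 q.2) (Icc a b ×ˢ Icc c d)) :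
    ContDiffOn ℝ (⊤ : ℕ∞) (fun q : ℝ × ℝ => P1 f (Icc a b ×ˢ Icc c d) q.1 q.2)
      (Icc a b ×ˢ Icc c d) := by
  have h1 : ContDiffOn ℝ (⊤ : ℕ∞) (fderivWithin ℝ (fun q : ℝ × ℝ => f q.1 q.2)
      (Icc a b ×ˢ Icc c d)) (Icc a b ×ˢ Icc c d) := hf.fderivWithin (uds hab hcd) (by simp)
  exact h1.clm_apply contDiffOn_const

lemma contDiffOn_P2 (hab : a < b) (hcd : c < d)
    (hf : ContDiffOn ℝ (⊤ : ℕ∞) (fun q : ℝ × ℝ => f q.1 q.2) (Icc a b ×ˢ Icc c d)) :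
    ContDiffOn ℝ (⊤ : ℕ∞) (fun q : ℝ × ℝ => P2 f (Icc a b ×ˢ Icc c d) q.1 q.2)
      (Icc a b ×ˢ Icc c d) := by
  have h1 : ContDiffOn ℝ (⊤ : ℕ∞) (fderivWithin ℝ (fun q : ℝ × ℝ => f q.1 q.2)
      (Icc a b ×ˢ Icc c d)) (Icc a b ×ˢ Icc c d) := hf.fderivWithin (uds hab hcd) (by simp)
  exact h1.clm_apply contDiffOn_const

lemma hasDerivAt_P1 (hcd : c < d)
    (hf : ContDiffOn ℝ (⊤ : ℕ∞) (fun q : ℝ × ℝ => f q.1 q.2) (Icc a b ×ˢ Icc c d))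
    {x t : ℝ} (hx : x ∈ Ioo a b) (ht : t ∈ Icc c d) :
    HasDerivAt (fun y => f y t) (P1 f (Icc a b ×ˢ Icc c d) x t) x := by
  have hmem : ((x, t) : ℝ × ℝ) ∈ Icc a b ×ˢ Icc c d := ⟨Ioo_subset_Icc_self hx, ht⟩
  have hd := ((hf.differentiableOn (by simp)) (x, t) hmem).hasFDerivWithinAt
  have hline : HasDerivAt (fun y : ℝ => ((y, t) : ℝ × ℝ)) (1, 0) x := by
    simpa using (hasDerivAt_id x).prodMk (hasDerivAt_const x t)
  have hcomp := hd.comp_hasDerivWithinAt x (hline.hasDerivWithinAt (s := Icc a b))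
    (fun y (hy : y ∈ Icc a b) => (⟨hy, ht⟩ : ((y, t) : ℝ × ℝ) ∈ Icc a b ×ˢ Icc c d))
  exact hcomp.hasDerivAt (Icc_mem_nhds hx.1 hx.2)

lemma hasDerivAt_P2 (hab : a < b)
    (hf : ContDiffOn ℝ (⊤ : ℕ∞) (fun q : ℝ × ℝ => f q.1 q.2) (Icc a b ×ˢ Icc c d))
    {x t : ℝ} (hx : x ∈ Icc a b) (ht : t ∈ Ioo c d) :
    HasDerivAt (fun s => f x s) (P2 f (Icc a b ×ˢ Icc c d) x t) t := by
  have hmem : ((x, t) : ℝ × ℝ) ∈ Icc a b ×ˢ Icc c d := ⟨hx, Ioo_subset_Icc_self ht⟩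
  have hd := ((hf.differentiableOn (by simp)) (x, t) hmem).hasFDerivWithinAt
  have hline : HasDerivAt (fun s : ℝ => ((x, s) : ℝ × ℝ)) (0, 1) t := by
    simpa using (hasDerivAt_const t x).prodMk (hasDerivAt_id t)
  have hcomp := hd.comp_hasDerivWithinAt t (hline.hasDerivWithinAt (s := Icc c d))
    (fun s hs => ⟨hx, hs⟩)
  exact hcomp.hasDerivAt (Icc_mem_nhds ht.1 ht.2)

lemma bound_of_compact {α : Type*} [TopologicalSpace α] {K : Set α} (hK : IsCompact K)
    {f : α → ℝ} (hf : ContinuousOn f K) : ∃ C, 0 ≤ C ∧ ∀ x ∈ K, |f x| ≤ C := by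
  obtain ⟨C, hC⟩ := hK.exists_bound_of_continuousOn hf
  refine ⟨max C 0, le_max_right _ _, fun x hx => le_trans ?_ (le_max_left _ _)⟩
  simpa [Real.norm_eq_abs] using hC x hx

lemma sliceX {g : ℝ → ℝ → ℝ}
    (hg : ContinuousOn (fun q : ℝ × ℝ => g q.1 q.2) (Icc a b ×ˢ Icc c d)) {t : ℝ}
    (ht : t ∈ Icc c d) : ContinuousOn (fun x => g x t) (Icc a b) :=
  hg.comp ((continuous_id.prodMk continuous_const).continuousOn) (fun x hx => ⟨hx, ht⟩)

lemma sliceT {g : ℝ → ℝ → ℝ}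
    (hg : ContinuousOn (fun q : ℝ × ℝ => g q.1 q.2) (Icc a b ×ˢ Icc c d)) {x : ℝ}
    (hx : x ∈ Icc a b) : ContinuousOn (fun t => g x t) (Icc c d) :=
  hg.comp ((continuous_const.prodMk continuous_id).continuousOn) (fun t ht => ⟨hx, ht⟩)

lemma intOn {g : ℝ → ℝ} (h : ContinuousOn g (Icc a b)) : IntegrableOn g (Ioo a b) :=
  (h.integrableOn_compact isCompact_Icc).mono_set Ioo_subset_Icc_self

lemma integrableOn_of_bounded' {α : Type*} [MeasurableSpace α] [TopologicalSpace α]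
    [OpensMeasurableSpace α] [T2Space α] [SecondCountableTopologyEither α ℝ]
    {μ : Measure α} {f : α → ℝ} {s : Set α}
    (hs : MeasurableSet s) (hfin : μ s ≠ ⊤) (hcont : ContinuousOn f s) {M : ℝ}
    (hb : ∀ x ∈ s, |f x| ≤ M) : IntegrableOn f s μ :=
  ⟨hcont.aestronglyMeasurable hs,
    HasFiniteIntegral.restrict_of_bounded (C := M) hfin.lt_top
      ((ae_restrict_iff' hs).mpr (ae_of_all _ fun x hx => by
        rw [Real.norm_eq_abs]; exact hb x hx))⟩

lemma hasDerivAt_integral_param {α : Set ℝ} (hαm : MeasurableSet α) (hαf : volume α ≠ ⊤)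
    {g g' : ℝ → ℝ → ℝ} {U : Set ℝ} (hU : IsOpen U) {x₀ : ℝ} (hx₀ : x₀ ∈ U)
    (hmeas : ∀ x ∈ U, ContinuousOn (fun t => g x t) α)
    (hmeas' : ContinuousOn (fun t => g' x₀ t) α)
    (hint : IntegrableOn (fun t => g x₀ t) α)
    {C : ℝ} (hbound : ∀ x ∈ U, ∀ t ∈ α, |g' x t| ≤ C)
    (hdiff : ∀ t ∈ α, ∀ x ∈ U, HasDerivAt (fun y => g y t) (g' x t) x) :
    HasDerivAt (fun x => ∫ t in α, g x t) (∫ t in α, g' x₀ t) x₀ := by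
  haveI : IsFiniteMeasure (volume.restrict α) :=
    ⟨by rw [Measure.restrict_apply_univ]; exact hαf.lt_top⟩
  obtain ⟨ε, hε, hball⟩ := Metric.isOpen_iff.mp hU x₀ hx₀
  refine (hasDerivAt_integral_of_dominated_loc_of_deriv_le (Metric.ball_mem_nhds x₀ hε)
    ?_ hint ((hmeas'.aestronglyMeasurable hαm)) ?_ (integrable_const C) ?_).2
  · filter_upwards [hU.mem_nhds hx₀] with x hx
    exact (hmeas x hx).aestronglyMeasurable hαm
  · refine (ae_restrict_iff' hαm).mpr (ae_of_all _ fun t ht x hx => ?_)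
    rw [Real.norm_eq_abs]
    exact hbound x (hball hx) t ht
  · refine (ae_restrict_iff' hαm).mpr (ae_of_all _ fun t ht x hx => ?_)
    exact hdiff t ht x (hball hx)

lemma continuousOn_integral_param {α : Set ℝ} (hαm : MeasurableSet α) (hαf : volume α ≠ ⊤)
    {g : ℝ → ℝ → ℝ} {s : Set ℝ}
    (hmeas : ∀ x ∈ s, ContinuousOn (fun t => g x t) α)
    {C : ℝ} (hbound : ∀ x ∈ s, ∀ t ∈ α, |g x t| ≤ C)
    (hcont : ∀ t ∈ α, ContinuousOn (fun x => g x t) s) :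
    ContinuousOn (fun x => ∫ t in α, g x t) s := by
  haveI : IsFiniteMeasure (volume.restrict α) :=
    ⟨by rw [Measure.restrict_apply_univ]; exact hαf.lt_top⟩
  refine continuousOn_of_dominated (fun x hx => (hmeas x hx).aestronglyMeasurable hαm)
    (fun x hx => (ae_restrict_iff' hαm).mpr (ae_of_all _ fun t ht => ?_))
    (integrable_const C) ((ae_restrict_iff' hαm).mpr (ae_of_all _ hcont))
  rw [Real.norm_eq_abs]; exact hbound x hx t ht

lemma integral_deriv_eq_zero (hab : a < b) {G D : ℝ → ℝ} (hG : ContinuousOn G (Icc a b))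
    (hD : ∀ x ∈ Ioo a b, HasDerivAt G (D x) x) (hDc : ContinuousOn D (Icc a b))
    (h0 : G a = 0) (h1 : G b = 0) : ∫ x in Ioo a b, D x = 0 := by
  have hii : IntervalIntegrable D volume a b := cont_intervalIntegrable hab.le hDc
  have key := integral_eq_sub_of_hasDeriv_right_of_le hab.le hG
    (fun x hx => (hD x hx).hasDerivWithinAt) hii
  have e1 : ∫ x in Ioo a b, D x = ∫ x in Ioc a b, D x :=
    setIntegral_congr_set Ioo_ae_eq_Ioc
  rw [e1, ← integral_of_le hab.le, key, h0, h1, sub_zero]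

lemma primitive_identity (hab : a < b) {F F' : ℝ → ℝ}
    (hFc : ContinuousOn F (Icc a b)) (hFd : ∀ t ∈ Ioo a b, HasDerivAt F (F' t) t)
    (hF'c : ContinuousOn F' (Icc a b)) :
    (b - a) * F b = (∫ t in a..b, F t) + ∫ t in a..b, (t - a) * F' t := by
  have huIcc : uIcc a b = Icc a b := uIcc_of_le hab.le
  have hFi : IntervalIntegrable F volume a b := cont_intervalIntegrable hab.le hFc
  set G := fun t => (t - a) * F t - ∫ s in a..t, F s with hGdef
  have hGc : ContinuousOn G (Icc a b) := by
    refine ((continuousOn_id.sub continuousOn_const).mul hFc).sub ?_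
    have := continuousOn_primitive_interval (μ := volume) (f := F) (a := a) (b := b)
      (by rw [huIcc]; exact hFc.integrableOn_compact isCompact_Icc)
    rwa [huIcc] at this
  have hGd : ∀ t ∈ Ioo a b, HasDerivAt G ((t - a) * F' t) t := by
    intro t ht
    have h1 : HasDerivAt (fun u => (u - a) * F u) (1 * F t + (t - a) * F' t) t :=
      ((hasDerivAt_id t).sub_const a).mul (hFd t ht)
    have h2 : HasDerivAt (fun u => ∫ s in a..u, F s) (F t) t := by
      refine integral_hasDerivAt_right (hFi.mono_set ?_)
        (ContinuousOn.stronglyMeasurableAtFilter isOpen_Ioo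
          (hFc.mono Ioo_subset_Icc_self) t ht)
        (hFc.continuousAt (Icc_mem_nhds ht.1 ht.2))
      rw [huIcc, uIcc_of_le ht.1.le]
      exact Icc_subset_Icc le_rfl ht.2.le
    have h3 := h1.sub h2
    exact h3.congr_deriv (by ring)
  have hDc : ContinuousOn (fun t => (t - a) * F' t) (Icc a b) :=
    (continuousOn_id.sub continuousOn_const).mul hF'c
  have hDi : IntervalIntegrable (fun t => (t - a) * F' t) volume a b :=
    cont_intervalIntegrable hab.le hDc
  have key := integral_eq_sub_of_hasDeriv_right_of_le hab.le hGc
    (fun t ht => (hGd t ht).hasDerivWithinAt) hDi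
  have hGa : G a = 0 := by simp [hGdef]
  have hGb : G b = (b - a) * F b - ∫ s in a..b, F s := rfl
  rw [hGb, hGa, sub_zero] at key
  linarith [key]

end Stmt9


open MeasureTheory Set intervalIntegral Filter Stmt9

theorem stmt_9 (L τ T : ℝ) (hL : 0 < L) (hτT : τ < T)
    (z w : ℝ → ℝ → ℝ)
    (hz : ContDiffOn ℝ (⊤ : ℕ∞) (fun p : ℝ × ℝ => z p.1 p.2) (Icc 0 L ×ˢ Icc τ T))
    (hw : ContDiffOn ℝ (⊤ : ℕ∞) (fun p : ℝ × ℝ => w p.1 p.2) (Icc 0 L ×ˢ Icc τ T))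
    (hpde : ∀ x ∈ Ioo 0 L, ∀ t ∈ Ioo τ T,
      deriv (fun s => z x s) t = deriv (deriv (fun y => w y t)) x)
    (hneu : ∀ t ∈ Icc τ T,
      deriv (fun y => w y t) 0 = 0 ∧ deriv (fun y => w y t) L = 0)
    (K γ : ℝ) (hK : 0 < K) (hγ : γ ∈ Ioo (0:ℝ) 1)
    (hY : ∀ x ∈ Ioo 0 L, ∀ t ∈ Icc τ T,
      |deriv (fun y => ∫ s in τ..T, w y s) x
        - deriv (fun y => ∫ s in τ..t, w y s) x| ≤ K * |T - t| ^ γ)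
    (φ : ℝ → ℝ) (hφ : ContDiff ℝ (⊤ : ℕ∞) φ) (hφc : HasCompactSupport φ)
    (hφΩ : Function.support φ ⊆ Ioo 0 L)
    (Cφ : ℝ) (hCφ : ∫ x in Ioo 0 L, |deriv φ x| ≤ Cφ) :
    (T - τ) * ∫ x in Ioo 0 L, z x T * φ x
      ≤ (∫ t in τ..T, ∫ x in Ioo 0 L, z x t * φ x)
        + (Cφ * K / (1 + γ)) * |T - τ| ^ ((1:ℝ) + γ) := by
  obtain ⟨hγ0, hγ1⟩ := hγ
  have hTτ : (0:ℝ) < T - τ := by linarith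
  set S : Set (ℝ × ℝ) := Icc 0 L ×ˢ Icc τ T with hSdef
  have hSc : IsCompact S := isCompact_Icc.prod isCompact_Icc
  set w1 : ℝ → ℝ → ℝ := P1 w S with hw1def
  set w2 : ℝ → ℝ → ℝ := P1 w1 S with hw2def
  set zt : ℝ → ℝ → ℝ := P2 z S with hztdef
  have hw1s : ContDiffOn ℝ (⊤ : ℕ∞) (fun q : ℝ × ℝ => w1 q.1 q.2) S := contDiffOn_P1 hL hτT hw
  have hw2s : ContDiffOn ℝ (⊤ : ℕ∞) (fun q : ℝ × ℝ => w2 q.1 q.2) S := contDiffOn_P1 hL hτT hw1s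
  have hzts : ContDiffOn ℝ (⊤ : ℕ∞) (fun q : ℝ × ℝ => zt q.1 q.2) S := contDiffOn_P2 hL hτT hz
  have hwc := hw.continuousOn
  have hzc := hz.continuousOn
  have hw1c := hw1s.continuousOn
  have hw2c := hw2s.continuousOn
  have hztc := hzts.continuousOn
  -- slice derivative facts
  have f1 : ∀ x ∈ Ioo 0 L, ∀ t ∈ Icc τ T, HasDerivAt (fun y => w y t) (w1 x t) x :=
    fun x hx t ht => hasDerivAt_P1 hτT hw hx ht
  have f2 : ∀ x ∈ Ioo 0 L, ∀ t ∈ Icc τ T, HasDerivAt (fun y => w1 y t) (w2 x t) x :=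
    fun x hx t ht => hasDerivAt_P1 hτT hw1s hx ht
  have f3 : ∀ x ∈ Icc 0 L, ∀ t ∈ Ioo τ T, HasDerivAt (fun s => z x s) (zt x t) t :=
    fun x hx t ht => hasDerivAt_P2 hL hz hx ht
  have f4 : ∀ x ∈ Ioo 0 L, ∀ t ∈ Ioo τ T, zt x t = w2 x t := by
    intro x hx t ht
    have ht' : t ∈ Icc τ T := Ioo_subset_Icc_self ht
    have hz' : zt x t = deriv (fun s => z x s) t :=
      ((f3 x (Ioo_subset_Icc_self hx) t ht).deriv).symm
    rw [hz', hpde x hx t ht]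
    have heq : Set.EqOn (deriv (fun y => w y t)) (fun y => w1 y t) (Ioo 0 L) :=
      fun y hy => (f1 y hy t ht').deriv
    have h5 : deriv (deriv (fun y => w y t)) x = deriv (fun y => w1 y t) x :=
      Filter.EventuallyEq.deriv_eq (heq.eventuallyEq_of_mem (isOpen_Ioo.mem_nhds hx))
    rw [h5]
    exact (f2 x hx t ht').deriv
  -- bounds
  obtain ⟨C0, hC0n, hC0⟩ := bound_of_compact hSc hwc
  obtain ⟨C1, hC1n, hC1⟩ := bound_of_compact hSc hw1c
  obtain ⟨C2, hC2n, hC2⟩ := bound_of_compact hSc hw2c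
  obtain ⟨Cz, hCzn, hCz⟩ := bound_of_compact hSc hzc
  obtain ⟨Ct, hCtn, hCt⟩ := bound_of_compact hSc hztc
  -- φ facts
  have hsm0 : ContDiff ℝ (⊤ : ℕ∞) φ := hφ.of_le (by simp)
  have hφd : Differentiable ℝ φ := hsm0.differentiable (by simp)
  have hφ1 : ContDiff ℝ (⊤ : ℕ∞) (deriv φ) := (contDiff_infty_iff_deriv.mp hsm0).2
  have hφ1d : Differentiable ℝ (deriv φ) := hφ1.differentiable (by simp)
  have hφ1c : Continuous (deriv φ) := hφ1.continuous
  have hφ2c : Continuous (deriv (deriv φ)) := (contDiff_infty_iff_deriv.mp hφ1).2.continuous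
  obtain ⟨M0, hM0n, hM0⟩ := bound_of_compact (isCompact_Icc (a := (0:ℝ)) (b := L))
    hφ.continuous.continuousOn
  obtain ⟨M1, hM1n, hM1⟩ := bound_of_compact (isCompact_Icc (a := (0:ℝ)) (b := L))
    hφ1c.continuousOn
  obtain ⟨M2, hM2n, hM2⟩ := bound_of_compact (isCompact_Icc (a := (0:ℝ)) (b := L))
    hφ2c.continuousOn
  have hφ0 : φ 0 = 0 := by
    by_contra h
    exact lt_irrefl 0 (hφΩ (Function.mem_support.mpr h)).1
  have hφL : φ L = 0 := by
    by_contra h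
    exact lt_irrefl L (hφΩ (Function.mem_support.mpr h)).2
  have hdIio : ∀ x < (0:ℝ), deriv φ x = 0 := by
    intro x hx
    have hev : φ =ᶠ[nhds x] (fun _ => 0) := by
      filter_upwards [isOpen_Iio.mem_nhds hx] with y hy
      by_contra h
      exact absurd (hφΩ (Function.mem_support.mpr h)).1 (by exact not_lt.mpr (le_of_lt hy))
    rw [hev.deriv_eq, deriv_const]
  have hdIoi : ∀ x, L < x → deriv φ x = 0 := by
    intro x hx
    have hev : φ =ᶠ[nhds x] (fun _ => 0) := by
      filter_upwards [isOpen_Ioi.mem_nhds hx] with y hy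
      by_contra h
      exact absurd (hφΩ (Function.mem_support.mpr h)).2 (not_lt.mpr (le_of_lt hy))
    rw [hev.deriv_eq, deriv_const]
  have hφ'0 : deriv φ 0 = 0 := by
    have h1 : Tendsto (deriv φ) (nhdsWithin 0 (Iio 0)) (nhds (deriv φ 0)) :=
      (hφ1c.continuousAt.continuousWithinAt).tendsto
    have h2 : Tendsto (deriv φ) (nhdsWithin 0 (Iio 0)) (nhds 0) := by
      refine Tendsto.congr' ?_ tendsto_const_nhds
      filter_upwards [self_mem_nhdsWithin] with y hy
      exact (hdIio y hy).symm
    exact tendsto_nhds_unique h1 h2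
  have hφ'L : deriv φ L = 0 := by
    have h1 : Tendsto (deriv φ) (nhdsWithin L (Ioi L)) (nhds (deriv φ L)) :=
      (hφ1c.continuousAt.continuousWithinAt).tendsto
    have h2 : Tendsto (deriv φ) (nhdsWithin L (Ioi L)) (nhds 0) := by
      refine Tendsto.congr' ?_ tendsto_const_nhds
      filter_upwards [self_mem_nhdsWithin] with y hy
      exact (hdIoi y hy).symm
    exact tendsto_nhds_unique h1 h2
  -- measures
  have hmx : MeasurableSet (Ioo (0:ℝ) L) := measurableSet_Ioo
  have hfx : volume (Ioo (0:ℝ) L) ≠ ⊤ := measure_Ioo_lt_top.ne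
  have hmt : MeasurableSet (Ioc τ T) := measurableSet_Ioc
  have hft : volume (Ioc τ T) ≠ ⊤ := measure_Ioc_lt_top.ne
  have hsubx : Ioo (0:ℝ) L ⊆ Icc 0 L := Ioo_subset_Icc_self
  have hsubt : Ioc τ T ⊆ Icc τ T := Ioc_subset_Icc_self
  have hφcc : Continuous φ := hφ.continuous
  set F : ℝ → ℝ := fun t => ∫ x in Ioo 0 L, z x t * φ x with hFdef
  set h : ℝ → ℝ := fun t => ∫ x in Ioo 0 L, zt x t * φ x with hhdef
  have hFc : ContinuousOn F (Icc τ T) := by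
    refine continuousOn_integral_param (g := fun t x => z x t * φ x) hmx hfx
      (fun t ht => (((sliceX hzc ht).mono hsubx).mul hφcc.continuousOn))
      (C := Cz * M0) (fun t ht x hx => ?_)
      (fun x hx => ((sliceT hzc (hsubx hx)).mul continuousOn_const))
    rw [abs_mul]
    exact mul_le_mul (hCz (x, t) ⟨hsubx hx, ht⟩) (hM0 x (hsubx hx)) (abs_nonneg _) hCzn
  have hhc : ContinuousOn h (Icc τ T) := by
    refine continuousOn_integral_param (g := fun t x => zt x t * φ x) hmx hfx
      (fun t ht => (((sliceX hztc ht).mono hsubx).mul hφcc.continuousOn))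
      (C := Ct * M0) (fun t ht x hx => ?_)
      (fun x hx => ((sliceT hztc (hsubx hx)).mul continuousOn_const))
    rw [abs_mul]
    exact mul_le_mul (hCt (x, t) ⟨hsubx hx, ht⟩) (hM0 x (hsubx hx)) (abs_nonneg _) hCtn
  have hFd : ∀ t ∈ Ioo τ T, HasDerivAt F (h t) t := by
    intro t ht
    refine hasDerivAt_integral_param (g := fun t x => z x t * φ x)
      (g' := fun t x => zt x t * φ x) hmx hfx isOpen_Ioo ht
      (fun u hu => (((sliceX hzc (Ioo_subset_Icc_self hu)).mono hsubx).mul hφcc.continuousOn))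
      (((sliceX hztc (Ioo_subset_Icc_self ht)).mono hsubx).mul hφcc.continuousOn)
      (intOn ((sliceX hzc (Ioo_subset_Icc_self ht)).mul hφcc.continuousOn))
      (C := Ct * M0) (fun u hu x hx => ?_)
      (fun x hx u hu => (f3 x (hsubx hx) u hu).mul_const (φ x))
    rw [abs_mul]
    exact mul_le_mul (hCt (x, u) ⟨hsubx hx, Ioo_subset_Icc_self hu⟩) (hM0 x (hsubx hx))
      (abs_nonneg _) hCtn
  have stepA := primitive_identity hτT hFc hFd hhc
  -- Step B : pointwise integration by parts in x
  set dd : ℝ → ℝ := deriv (deriv φ) with hdddef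
  have hB : ∀ t ∈ Ioo τ T, h t = ∫ x in Ioo 0 L, w x t * dd x := by
    intro t ht
    have ht' : t ∈ Icc τ T := Ioo_subset_Icc_self ht
    have c_w : ContinuousOn (fun x => w x t) (Icc 0 L) := sliceX hwc ht'
    have c_w1 : ContinuousOn (fun x => w1 x t) (Icc 0 L) := sliceX hw1c ht'
    have c_w2 : ContinuousOn (fun x => w2 x t) (Icc 0 L) := sliceX hw2c ht'
    have i1 : IntegrableOn (fun x => w2 x t * φ x) (Ioo 0 L) :=
      intOn (c_w2.mul hφcc.continuousOn)
    have i2 : IntegrableOn (fun x => w1 x t * deriv φ x) (Ioo 0 L) :=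
      intOn (c_w1.mul hφ1c.continuousOn)
    have i3 : IntegrableOn (fun x => w x t * dd x) (Ioo 0 L) :=
      intOn (c_w.mul hφ2c.continuousOn)
    have e1 : h t = ∫ x in Ioo 0 L, w2 x t * φ x :=
      setIntegral_congr_fun hmx (fun x hx => by rw [f4 x hx t ht])
    have IBP1 : ∫ x in Ioo 0 L, (w2 x t * φ x + w1 x t * deriv φ x) = 0 := by
      refine integral_deriv_eq_zero hL (G := fun x => w1 x t * φ x)
        (c_w1.mul hφcc.continuousOn)
        (fun x hx => ((f2 x hx t ht').mul (hφd x).hasDerivAt))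
        ((c_w2.mul hφcc.continuousOn).add (c_w1.mul hφ1c.continuousOn))
        (by simp [hφ0]) (by simp [hφL])
    have IBP2 : ∫ x in Ioo 0 L, (w1 x t * deriv φ x + w x t * dd x) = 0 := by
      refine integral_deriv_eq_zero hL (G := fun x => w x t * deriv φ x)
        (c_w.mul hφ1c.continuousOn)
        (fun x hx => ((f1 x hx t ht').mul (hφ1d x).hasDerivAt))
        ((c_w1.mul hφ1c.continuousOn).add (c_w.mul hφ2c.continuousOn))
        (by simp [hφ'0]) (by simp [hφ'L])
    rw [integral_add i1 i2] at IBP1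
    rw [integral_add i2 i3] at IBP2
    rw [e1]
    linarith
  -- Step C : Fubini
  set V : ℝ → ℝ := fun x => ∫ t in Ioc τ T, (t - τ) * w x t with hVdef
  set V' : ℝ → ℝ := fun x => ∫ t in Ioc τ T, (t - τ) * w1 x t with hV'def
  have habs_tτ : ∀ t ∈ Icc τ T, |t - τ| ≤ T - τ := fun t ht => by
    rw [abs_of_nonneg (by linarith [ht.1] : (0:ℝ) ≤ t - τ)]; linarith [ht.2]
  have hCfub : ∫ t in τ..T, (t - τ) * h t = ∫ x in Ioo 0 L, dd x * V x := by
    have e0 : ∫ t in τ..T, (t - τ) * h t = ∫ t in Ioo τ T, (t - τ) * h t := by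
      rw [integral_of_le hτT.le]
      exact (setIntegral_congr_set Ioo_ae_eq_Ioc).symm
    have e1 : ∫ t in Ioo τ T, (t - τ) * h t
        = ∫ t in Ioo τ T, ∫ x in Ioo 0 L, (t - τ) * (w x t * dd x) := by
      refine setIntegral_congr_fun measurableSet_Ioo (fun t ht => ?_)
      rw [hB t ht, ← MeasureTheory.integral_const_mul]
    have hFub : Integrable (Function.uncurry (fun t x => (t - τ) * (w x t * dd x)))
        ((volume.restrict (Ioo τ T)).prod (volume.restrict (Ioo 0 L))) := by
      rw [Measure.prod_restrict, ← Measure.volume_eq_prod]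
      have hcontu : ContinuousOn (Function.uncurry (fun t x => (t - τ) * (w x t * dd x)))
          (Ioo τ T ×ˢ Ioo 0 L) := by
        have hsw : ContinuousOn (fun p : ℝ × ℝ => w p.2 p.1) (Ioo τ T ×ˢ Ioo 0 L) := by
          refine hwc.comp (continuous_snd.prodMk continuous_fst).continuousOn ?_
          intro p hp
          exact ⟨hsubx hp.2, Ioo_subset_Icc_self hp.1⟩
        exact ((continuous_fst.sub continuous_const).continuousOn).mul
          (hsw.mul (hφ2c.comp continuous_snd).continuousOn)
      refine integrableOn_of_bounded' (measurableSet_Ioo.prod measurableSet_Ioo) ?_ hcontu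
        (M := (T - τ) * (C0 * M2)) ?_
      · have hsub2 : Ioo τ T ×ˢ Ioo 0 L ⊆ Icc τ T ×ˢ Icc 0 L :=
          Set.prod_mono Ioo_subset_Icc_self Ioo_subset_Icc_self
        have hfin2 : volume (Icc τ T ×ˢ Icc (0:ℝ) L) < ⊤ := by
          rw [Measure.volume_eq_prod, Measure.prod_prod]
          exact ENNReal.mul_lt_top measure_Icc_lt_top measure_Icc_lt_top
        exact ((measure_mono hsub2).trans_lt hfin2).ne
      · rintro ⟨t, x⟩ ⟨ht, hx⟩
        have h1 : |t - τ| ≤ T - τ := habs_tτ t (Ioo_subset_Icc_self ht)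
        have h2 : |w x t * dd x| ≤ C0 * M2 := by
          rw [abs_mul]
          exact mul_le_mul (hC0 (x, t) ⟨hsubx hx, Ioo_subset_Icc_self ht⟩)
            (hM2 x (hsubx hx)) (abs_nonneg _) hC0n
        calc |Function.uncurry (fun t x => (t - τ) * (w x t * dd x)) (t, x)|
            = |t - τ| * |w x t * dd x| := by rw [Function.uncurry]; exact abs_mul _ _
          _ ≤ (T - τ) * (C0 * M2) := mul_le_mul h1 h2 (abs_nonneg _)
              (by linarith)
    have e2 := integral_integral_swap hFub
    have e3 : ∀ x ∈ Ioo 0 L, ∫ t in Ioo τ T, (t - τ) * (w x t * dd x) = dd x * V x := by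
      intro x hx
      have : ∀ t, (t - τ) * (w x t * dd x) = ((t - τ) * w x t) * dd x := fun t => by ring
      simp_rw [this]
      rw [MeasureTheory.integral_mul_const]
      rw [setIntegral_congr_set Ioo_ae_eq_Ioc]
      exact mul_comm _ _
    rw [e0, e1]
    rw [e2]
    exact setIntegral_congr_fun hmx e3
  -- step E : integration by parts in x for the V-term
  have hVc : ContinuousOn V (Icc 0 L) := by
    refine continuousOn_integral_param (g := fun x t => (t - τ) * w x t) hmt hft
      (fun x hx => (continuousOn_id.sub continuousOn_const).mul ((sliceT hwc hx).mono hsubt))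
      (C := (T - τ) * C0) (fun x hx t ht => ?_)
      (fun t ht => continuousOn_const.mul (sliceX hwc (hsubt ht)))
    rw [abs_mul]
    exact mul_le_mul (habs_tτ t (hsubt ht)) (hC0 (x, t) ⟨hx, hsubt ht⟩) (abs_nonneg _)
      (by linarith)
  have hV'c : ContinuousOn V' (Icc 0 L) := by
    refine continuousOn_integral_param (g := fun x t => (t - τ) * w1 x t) hmt hft
      (fun x hx => (continuousOn_id.sub continuousOn_const).mul ((sliceT hw1c hx).mono hsubt))
      (C := (T - τ) * C1) (fun x hx t ht => ?_)
      (fun t ht => continuousOn_const.mul (sliceX hw1c (hsubt ht)))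
    rw [abs_mul]
    exact mul_le_mul (habs_tτ t (hsubt ht)) (hC1 (x, t) ⟨hx, hsubt ht⟩) (abs_nonneg _)
      (by linarith)
  have hVd : ∀ x ∈ Ioo 0 L, HasDerivAt V (V' x) x := by
    intro x hx
    refine hasDerivAt_integral_param (g := fun x t => (t - τ) * w x t)
      (g' := fun x t => (t - τ) * w1 x t) hmt hft isOpen_Ioo hx
      (fun y hy => (continuousOn_id.sub continuousOn_const).mul
        ((sliceT hwc (hsubx hy)).mono hsubt))
      ((continuousOn_id.sub continuousOn_const).mul ((sliceT hw1c (hsubx hx)).mono hsubt))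
      ((((continuousOn_id.sub continuousOn_const).mul
        ((sliceT hwc (hsubx hx)))).integrableOn_compact isCompact_Icc).mono_set hsubt)
      (C := (T - τ) * C1) (fun y hy t ht => ?_)
      (fun t ht y hy => (f1 y hy t (hsubt ht)).const_mul (t - τ))
    rw [abs_mul]
    exact mul_le_mul (habs_tτ t (hsubt ht)) (hC1 (y, t) ⟨hsubx hy, hsubt ht⟩) (abs_nonneg _)
      (by linarith)
  have hE : ∫ x in Ioo 0 L, dd x * V x = - ∫ x in Ioo 0 L, deriv φ x * V' x := by
    have i1 : IntegrableOn (fun x => dd x * V x) (Ioo 0 L) :=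
      intOn (hφ2c.continuousOn.mul hVc)
    have i2 : IntegrableOn (fun x => deriv φ x * V' x) (Ioo 0 L) :=
      intOn (hφ1c.continuousOn.mul hV'c)
    have IBP : ∫ x in Ioo 0 L, (dd x * V x + deriv φ x * V' x) = 0 := by
      refine integral_deriv_eq_zero hL (G := fun x => deriv φ x * V x)
        (hφ1c.continuousOn.mul hVc)
        (fun x hx => ((hφ1d x).hasDerivAt.mul (hVd x hx)))
        ((hφ2c.continuousOn.mul hVc).add (hφ1c.continuousOn.mul hV'c))
        (by simp [hφ'0]) (by simp [hφ'L])
    rw [integral_add i1 i2] at IBP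
    linarith
  -- Step D : the Hölder bound on V'
  set M : ℝ := K * (T - τ) ^ ((1:ℝ) + γ) / (1 + γ) with hMdef
  have hMn : 0 ≤ M := by positivity
  have hM : ∀ x ∈ Ioo 0 L, |V' x| ≤ M := by
    intro x hx
    set Yt : ℝ → ℝ := fun t => ∫ s in τ..t, w1 x s with hYtdef
    have hw1x : ContinuousOn (fun s => w1 x s) (Icc τ T) := sliceT hw1c (hsubx hx)
    have hYtc : ContinuousOn Yt (Icc τ T) := by
      have := continuousOn_primitive_interval (μ := volume) (f := fun s => w1 x s)
        (a := τ) (b := T) (by rw [uIcc_of_le hτT.le]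
                              exact hw1x.integrableOn_compact isCompact_Icc)
      rwa [uIcc_of_le hτT.le] at this
    have hYtd : ∀ t ∈ Ioo τ T, HasDerivAt Yt (w1 x t) t := by
      intro t ht
      refine integral_hasDerivAt_right
        ((cont_intervalIntegrable hτT.le hw1x).mono_set ?_)
        (ContinuousOn.stronglyMeasurableAtFilter isOpen_Ioo
          (hw1x.mono Ioo_subset_Icc_self) t ht)
        (hw1x.continuousAt (Icc_mem_nhds ht.1 ht.2))
      rw [uIcc_of_le hτT.le, uIcc_of_le ht.1.le]
      exact Icc_subset_Icc le_rfl ht.2.le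
    have hP : ∀ t ∈ Icc τ T, deriv (fun y => ∫ s in τ..t, w y s) x = Yt t := by
      intro t ht
      have hIocsub : Ioc τ t ⊆ Icc τ T := fun s hs => ⟨hs.1.le, hs.2.trans ht.2⟩
      have hD : HasDerivAt (fun y => ∫ s in Ioc τ t, w y s) (∫ s in Ioc τ t, w1 x s) x := by
        refine hasDerivAt_integral_param measurableSet_Ioc measure_Ioc_lt_top.ne
          isOpen_Ioo hx
          (fun y hy => ((sliceT hwc (hsubx hy)).mono hIocsub))
          ((sliceT hw1c (hsubx hx)).mono hIocsub)
          (((((sliceT hwc (hsubx hx)).mono (Icc_subset_Icc le_rfl ht.2)).integrableOn_compact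
            isCompact_Icc)).mono_set Ioc_subset_Icc_self)
          (C := C1) (fun y hy s hs => hC1 (y, s) ⟨hsubx hy, hIocsub hs⟩)
          (fun s hs y hy => f1 y hy s (hIocsub hs))
      have hfun : (fun y => ∫ s in τ..t, w y s) = fun y => ∫ s in Ioc τ t, w y s := by
        funext y; exact integral_of_le ht.1
      have hval : Yt t = ∫ s in Ioc τ t, w1 x s := integral_of_le ht.1
      rw [hfun, hval]
      exact hD.deriv
    have hYbound : ∀ t ∈ Icc τ T, |Yt T - Yt t| ≤ K * (T - t) ^ γ := by
      intro t ht
      have := hY x hx t ht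
      rw [hP T (right_mem_Icc.mpr hτT.le), hP t ht] at this
      rwa [abs_of_nonneg (by linarith [ht.2] : (0:ℝ) ≤ T - t)] at this
    have hid := primitive_identity hτT hYtc hYtd hw1x
    have hYti : IntervalIntegrable Yt volume τ T := cont_intervalIntegrable hτT.le hYtc
    have hV'x : V' x = ∫ t in τ..T, (Yt T - Yt t) := by
      have e1 : V' x = ∫ t in τ..T, (t - τ) * w1 x t := (integral_of_le hτT.le).symm
      have e2 : ∫ t in τ..T, (Yt T - Yt t)
          = (∫ t in τ..T, Yt T) - ∫ t in τ..T, Yt t :=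
        integral_sub (intervalIntegrable_const) hYti
      have e3 : ∫ t in τ..T, Yt T = (T - τ) * Yt T := by
        rw [intervalIntegral.integral_const, smul_eq_mul]
      rw [e1, e2, e3]
      linarith [hid]
    have hgb : ∀ t ∈ Icc τ T, |Yt T - Yt t| ≤ K * (T - t) ^ γ := hYbound
    have habs : ContinuousOn (fun t => |Yt T - Yt t|) (Icc τ T) :=
      (continuousOn_const.sub hYtc).abs
    have hrpowc : Continuous (fun t : ℝ => K * (T - t) ^ γ) := by
      have : Continuous (fun t : ℝ => (T - t) ^ γ) := by
        refine continuous_iff_continuousAt.mpr (fun t => ?_)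
        exact (Real.continuousAt_rpow_const _ _ (Or.inr hγ0.le)).comp
          ((continuous_const.sub continuous_id).continuousAt)
      exact continuous_const.mul this
    have hle1 : |∫ t in τ..T, (Yt T - Yt t)| ≤ ∫ t in τ..T, |Yt T - Yt t| := by
      rw [← Real.norm_eq_abs]
      refine (intervalIntegral.norm_integral_le_integral_norm hτT.le).trans_eq ?_
      simp [Real.norm_eq_abs]
    have hle2 : ∫ t in τ..T, |Yt T - Yt t| ≤ ∫ t in τ..T, K * (T - t) ^ γ := by
      refine intervalIntegral.integral_mono_on hτT.le
        (cont_intervalIntegrable hτT.le habs)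
        (cont_intervalIntegrable hτT.le hrpowc.continuousOn) hgb
    have hval : ∫ t in τ..T, K * (T - t) ^ γ = M := by
      rw [intervalIntegral.integral_const_mul]
      have e4 : ∫ t in τ..T, (T - t) ^ γ = ∫ u in (0:ℝ)..(T - τ), u ^ γ := by
        have := integral_comp_sub_left (a := τ) (b := T) (fun u : ℝ => u ^ γ) T
        simpa using this
      rw [e4, integral_rpow (Or.inl (by linarith : (-1:ℝ) < γ))]
      rw [Real.zero_rpow (by positivity : γ + 1 ≠ 0)]
      rw [hMdef]
      rw [show γ + 1 = 1 + γ by ring]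
      ring
    rw [hV'x]
    calc |∫ t in τ..T, (Yt T - Yt t)| ≤ ∫ t in τ..T, |Yt T - Yt t| := hle1
      _ ≤ ∫ t in τ..T, K * (T - t) ^ γ := hle2
      _ = M := hval
  -- final assembly
  have hRbound : - ∫ x in Ioo 0 L, deriv φ x * V' x ≤ Cφ * M := by
    have i2 : IntegrableOn (fun x => deriv φ x * V' x) (Ioo 0 L) :=
      intOn (hφ1c.continuousOn.mul hV'c)
    have h1 : - ∫ x in Ioo 0 L, deriv φ x * V' x ≤ |∫ x in Ioo 0 L, deriv φ x * V' x| :=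
      neg_le_abs _
    have h2 : |∫ x in Ioo 0 L, deriv φ x * V' x| ≤ ∫ x in Ioo 0 L, |deriv φ x * V' x| := by
      rw [← Real.norm_eq_abs]
      refine (MeasureTheory.norm_integral_le_integral_norm _).trans_eq ?_
      simp [Real.norm_eq_abs, abs_mul]
    have h3 : ∫ x in Ioo 0 L, |deriv φ x * V' x| ≤ ∫ x in Ioo 0 L, |deriv φ x| * M := by
      refine setIntegral_mono_on i2.abs ?_ hmx (fun x hx => ?_)
      · exact (intOn hφ1c.continuousOn.abs).mul_const M
      · rw [abs_mul]
        exact mul_le_mul_of_nonneg_left (hM x hx) (abs_nonneg _)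
    have h4 : ∫ x in Ioo 0 L, |deriv φ x| * M = (∫ x in Ioo 0 L, |deriv φ x|) * M :=
      integral_mul_const M _
    have h5 : (∫ x in Ioo 0 L, |deriv φ x|) * M ≤ Cφ * M :=
      mul_le_mul_of_nonneg_right hCφ hMn
    linarith
  have hfinal : ∫ t in τ..T, (t - τ) * h t ≤ Cφ * M := by
    rw [hCfub, hE]
    exact hRbound
  have hgoal : (Cφ * K / (1 + γ)) * |T - τ| ^ ((1:ℝ) + γ) = Cφ * M := by
    rw [hMdef, abs_of_pos hTτ]
    field_simp
  rw [hgoal]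
  calc (T - τ) * F T = (∫ t in τ..T, F t) + ∫ t in τ..T, (t - τ) * h t := stepA
    _ ≤ (∫ t in τ..T, F t) + Cφ * M := by linarith [hfinal]
end

section
/- Let p ≥ 2 be an integer, m ≥ 1, and θ ∈ (0,∞)^m. Define for u = (u₁,…,u_m) with each u_i ∈ L^p(Ω), u_i ≥ 0, the energy E_p[u] := Σ_{β∈ℤ₊^m, |β|=p} (p! / (β₁!···β_m!)) · (∏_{i=1}^m θ_i^{β_i²}) · ∫_Ω ∏_{i=1}^m u_i^{β_i} dx. Then there exists λ = λ(p, θ, m) > 0 such that λ^{-1} Σ_{i=1}^m ‖u_i‖_{L^p(Ω)}^p ≤ E_p[u] ≤ λ Σ_{i=1}^m ‖u_i‖_{L^p(Ω)}^p for all such nonnegative u. -/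
open MeasureTheory Set

/-- The `L^p`-energy functional `E_p[u]`. -/
noncomputable def energyE (Ω : Set ℝ) (m p : ℕ) (θ : Fin m → ℝ)
    (u : Fin m → ℝ → ℝ) : ℝ :=
  ∑ β ∈ Finset.Nat.antidiagonalTuple m p,
    (Nat.multinomial Finset.univ β : ℝ) * (∏ i, θ i ^ (β i) ^ 2) *
      ∫ x in Ω, ∏ i, (u i x) ^ (β i)

theorem stmt_11 (Ω : Set ℝ) (hΩ : MeasurableSet Ω) (hΩfin : volume Ω < ⊤)
    (m p : ℕ) (hm : 1 ≤ m) (hp : 2 ≤ p)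
    (θ : Fin m → ℝ) (hθ : ∀ i, 0 < θ i) :
    ∃ lam > (0:ℝ), ∀ u : Fin m → ℝ → ℝ,
      (∀ i, Measurable (u i)) → (∀ i x, 0 ≤ u i x) →
      (∀ i, IntegrableOn (fun x => (u i x) ^ p) Ω) →
      lam⁻¹ * (∑ i, ∫ x in Ω, (u i x) ^ p) ≤ energyE Ω m p θ u ∧
        energyE Ω m p θ u ≤ lam * ∑ i, ∫ x in Ω, (u i x) ^ p := by
  haveI : Nonempty (Fin m) := ⟨⟨0, hm⟩⟩
  have hne : (Finset.univ : Finset (Fin m)).Nonempty := Finset.univ_nonempty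
  set c : ℝ := Finset.univ.inf' hne (fun i => θ i ^ (p ^ 2)) with hc
  have hcpos : 0 < c := by
    rw [hc, Finset.lt_inf'_iff]
    exact fun i _ => pow_pos (hθ i) _
  set K : ℝ := ∑ β ∈ Finset.Nat.antidiagonalTuple m p,
      (Nat.multinomial Finset.univ β : ℝ) * (∏ i, θ i ^ (β i) ^ 2) with hK
  have hcoeff_nonneg : ∀ β : Fin m → ℕ,
      0 ≤ (Nat.multinomial Finset.univ β : ℝ) * (∏ i, θ i ^ (β i) ^ 2) := by
    intro β
    exact mul_nonneg (Nat.cast_nonneg _)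
      (Finset.prod_nonneg fun i _ => pow_nonneg (hθ i).le _)
  have hKnn : 0 ≤ K := Finset.sum_nonneg fun β _ => hcoeff_nonneg β
  refine ⟨max c⁻¹ (K + 1), lt_of_lt_of_le (inv_pos.mpr hcpos) (le_max_left _ _), ?_⟩
  intro u hmeas hnn hInt
  set lam : ℝ := max c⁻¹ (K + 1) with hlam
  have hlampos : 0 < lam := lt_of_lt_of_le (inv_pos.mpr hcpos) (le_max_left _ _)
  set S : ℝ := ∑ i, ∫ x in Ω, (u i x) ^ p with hS
  have hIuinn : ∀ i, 0 ≤ ∫ x in Ω, (u i x) ^ p := fun i =>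
    integral_nonneg fun x => pow_nonneg (hnn i x) p
  have hSnn : 0 ≤ S := Finset.sum_nonneg fun i _ => hIuinn i
  -- nonnegativity of each integral term
  have hInonneg : ∀ β : Fin m → ℕ, 0 ≤ ∫ x in Ω, ∏ i, (u i x) ^ (β i) := fun β =>
    integral_nonneg fun x => Finset.prod_nonneg fun i _ => pow_nonneg (hnn i x) _
  constructor
  · -- lower bound
    have hlaminv : lam⁻¹ ≤ c := by
      rw [← inv_inv c]
      exact inv_anti₀ (inv_pos.mpr hcpos) (le_max_left _ _)
    have h1 : lam⁻¹ * S ≤ c * S := mul_le_mul_of_nonneg_right hlaminv hSnn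
    refine h1.trans ?_
    -- c * S ≤ ∑ i, θ i ^ (p^2) * ∫ u i ^ p
    have h2 : c * S ≤ ∑ i, θ i ^ (p ^ 2) * ∫ x in Ω, (u i x) ^ p := by
      rw [hS, Finset.mul_sum]
      refine Finset.sum_le_sum fun i _ => ?_
      exact mul_le_mul_of_nonneg_right (Finset.inf'_le _ (Finset.mem_univ i)) (hIuinn i)
    refine h2.trans ?_
    -- sum over the pure tuples
    have hsingle_mem : ∀ i : Fin m,
        Pi.single i p ∈ Finset.Nat.antidiagonalTuple m p := by
      intro i
      rw [Finset.Nat.mem_antidiagonalTuple]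
      simp
    have hinj : Set.InjOn (fun i : Fin m => Pi.single i p)
        (Finset.univ : Finset (Fin m)) := by
      intro i _ j _ h
      by_contra hij
      have := congrFun h i
      simp [Pi.single_apply, hij] at this
      omega
    have hterm : ∀ i : Fin m,
        θ i ^ (p ^ 2) * (∫ x in Ω, (u i x) ^ p) ≤
        (Nat.multinomial Finset.univ (Pi.single i p) : ℝ) *
          (∏ j, θ j ^ ((Pi.single i p : Fin m → ℕ) j) ^ 2) *
          ∫ x in Ω, ∏ j, (u j x) ^ ((Pi.single i p : Fin m → ℕ) j) := by
      intro i
      have hprodθ : (∏ j, θ j ^ ((Pi.single i p : Fin m → ℕ) j) ^ 2) = θ i ^ (p ^ 2) := by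
        rw [Finset.prod_eq_single i]
        · simp
        · intro j _ hji
          simp [Pi.single_apply, hji]
        · simp
      have hprodu : ∀ x, (∏ j, (u j x) ^ ((Pi.single i p : Fin m → ℕ) j)) = (u i x) ^ p := by
        intro x
        rw [Finset.prod_eq_single i]
        · simp
        · intro j _ hji
          simp [Pi.single_apply, hji]
        · simp
      simp only [hprodθ]
      rw [show (∫ x in Ω, ∏ j, (u j x) ^ ((Pi.single i p : Fin m → ℕ) j)) =
          ∫ x in Ω, (u i x) ^ p from integral_congr_ae (Filter.Eventually.of_forall
            fun x => hprodu x)]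
      have h1le : (1 : ℝ) ≤ (Nat.multinomial Finset.univ (Pi.single i p) : ℝ) := by
        exact_mod_cast Nat.one_le_iff_ne_zero.mpr (Nat.multinomial_pos _ _).ne'
      nlinarith [hIuinn i, mul_nonneg (pow_nonneg (hθ i).le (p^2)) (hIuinn i),
        pow_pos (hθ i) (p ^ 2)]
    calc ∑ i, θ i ^ (p ^ 2) * ∫ x in Ω, (u i x) ^ p
        ≤ ∑ i, (Nat.multinomial Finset.univ (Pi.single i p) : ℝ) *
            (∏ j, θ j ^ ((Pi.single i p : Fin m → ℕ) j) ^ 2) *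
            ∫ x in Ω, ∏ j, (u j x) ^ ((Pi.single i p : Fin m → ℕ) j) :=
          Finset.sum_le_sum fun i _ => hterm i
      _ = ∑ β ∈ Finset.univ.image (fun i : Fin m => Pi.single i p),
            (Nat.multinomial Finset.univ β : ℝ) * (∏ j, θ j ^ (β j) ^ 2) *
            ∫ x in Ω, ∏ j, (u j x) ^ (β j) := by
          rw [Finset.sum_image fun i hi j hj h => hinj hi hj h]
      _ ≤ energyE Ω m p θ u := by
          refine Finset.sum_le_sum_of_subset_of_nonneg ?_ fun β _ _ =>
            mul_nonneg (hcoeff_nonneg β) (hInonneg β)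
          intro β hβ
          obtain ⟨i, _, rfl⟩ := Finset.mem_image.mp hβ
          exact hsingle_mem i
  · -- upper bound
    have hterm_le : ∀ β ∈ Finset.Nat.antidiagonalTuple m p,
        (∫ x in Ω, ∏ i, (u i x) ^ (β i)) ≤ S := by
      intro β hβ
      rw [Finset.Nat.mem_antidiagonalTuple] at hβ
      have hgint : Integrable (fun x => ∑ i, (u i x) ^ p) (volume.restrict Ω) :=
        integrable_finset_sum _ fun i _ => hInt i
      have hle : ∀ x, (∏ i, (u i x) ^ (β i)) ≤ ∑ i, (u i x) ^ p := by
        intro x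
        obtain ⟨j, _, hj⟩ := Finset.exists_max_image (Finset.univ : Finset (Fin m)) (fun i => u i x) hne
        have hM : ∀ i, u i x ≤ u j x := fun i => hj i (Finset.mem_univ i)
        calc (∏ i, (u i x) ^ (β i)) ≤ ∏ i, (u j x) ^ (β i) :=
              Finset.prod_le_prod (fun i _ => pow_nonneg (hnn i x) _)
                (fun i _ => pow_le_pow_left₀ (hnn i x) (hM i) _)
          _ = (u j x) ^ p := by rw [Finset.prod_pow_eq_pow_sum, hβ]
          _ ≤ ∑ i, (u i x) ^ p :=
              Finset.single_le_sum (fun i _ => pow_nonneg (hnn i x) p)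
                (Finset.mem_univ j)
      calc (∫ x in Ω, ∏ i, (u i x) ^ (β i)) ≤ ∫ x in Ω, ∑ i, (u i x) ^ p :=
            integral_mono_of_nonneg
              (Filter.Eventually.of_forall fun x =>
                Finset.prod_nonneg fun i _ => pow_nonneg (hnn i x) _)
              hgint (Filter.Eventually.of_forall hle)
        _ = S := by rw [hS, integral_finset_sum _ fun i _ => hInt i]
    calc energyE Ω m p θ u
        ≤ ∑ β ∈ Finset.Nat.antidiagonalTuple m p,
            (Nat.multinomial Finset.univ β : ℝ) * (∏ i, θ i ^ (β i) ^ 2) * S := by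
          refine Finset.sum_le_sum fun β hβ => ?_
          exact mul_le_mul_of_nonneg_left (hterm_le β hβ) (hcoeff_nonneg β)
      _ = K * S := by rw [hK, Finset.sum_mul]
      _ ≤ lam * S := by
          refine mul_le_mul_of_nonneg_right ?_ hSnn
          exact le_trans (by linarith) (le_max_right c⁻¹ (K + 1))
end
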